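/- arXiv:1710.00820 — 5 statements merged into one kernel-verified Lean document; each statement's English description precedes it below -/
import Mathlib

section
/- For every n > 0, the monoid L₄¹ satisfies the identity Uₙ ≈ Vₙ, where Uₙ = (x₁x₂⋯xₙ)(xₙxₙ₋₁⋯x₁)(x₁x₂⋯xₙ) and Vₙ = (x₁x₂⋯xₙ)(x₁²x₂²⋯xₙ²) for distinct variables x₁,…,xₙ. -/
/-- The alphabet of variables. -/
abbrev Var := ℕ

/-- Words are (possibly empty) lists of variables; elements of the free
semigroup `𝔄⁺` are the nonempty ones. -/
abbrev Word := List Var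

/-- Two words are of the same type if they agree after collapsing each
maximal constant run (island) to a single letter. -/
def sameType (u v : Word) : Prop :=
  u.destutter (· ≠ ·) = v.destutter (· ≠ ·)

/-- The number of islands of a word. -/
def height (u : Word) : ℕ := (u.destutter (· ≠ ·)).length

/-- The set of variables occurring in a word. -/
def con (u : Word) : Set Var := {x | x ∈ u}

/-- `del u X` is the word obtained from `u` by deleting all occurrences of all
variables not in the list `X`; i.e. `u(x₁,…,x_k)` for `X = [x₁,…,x_k]`. -/
def del (u : Word) (X : List Var) : Word := u.filter (· ∈ X)

/-- The set of linear variables of `u` (occurring exactly once). -/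
def lin (u : Word) : Set Var := {x | u.count x = 1}

/-- The set of non-linear variables of `u` (occurring at least twice). -/
def nonlin (u : Word) : Set Var := {x | 2 ≤ u.count x}

/-- The set of variables occurring exactly twice in `u`. -/
def con2 (u : Word) : Set Var := {x | u.count x = 2}

/-- The set of variables occurring at least three times in `u`. -/
def conGt2 (u : Word) : Set Var := {x | 3 ≤ u.count x}

/-- Applying a substitution `Θ : 𝔄 → 𝔄⁺` to a word, as the extension of `Θ`
to a homomorphism. -/
def subst (Θ : Var → Word) (u : Word) : Word := u.flatMap Θ

/-- `w` is a power (with positive exponent) of the variable `c`. -/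
def isPowerOf (w : Word) (c : Var) : Prop := ∃ k : ℕ, 0 < k ∧ w = List.replicate k c

/-- A monoid `M` satisfies the identity `u ≈ v` if every monoid homomorphism
from the free monoid `𝔄*` to `M` (equivalently, the extension of every map
`φ : 𝔄 → M`) identifies `u` and `v`. -/
def MSat (M : Type) [Monoid M] (u v : Word) : Prop :=
  ∀ φ : Var → M, (u.map φ).prod = (v.map φ).prod

/-- Evaluation of a nonempty word in a semigroup under `φ : 𝔄 → S`
(the empty word evaluates to `none`). -/
def evalS {S : Type} [Semigroup S] (φ : Var → S) : Word → Option S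
  | [] => none
  | a :: t => some ((t.map φ).foldl (· * ·) (φ a))

/-- A semigroup `S` satisfies the identity `u ≈ v` between nonempty words if
every semigroup homomorphism from the free semigroup `𝔄⁺` to `S` identifies
`u` and `v`. -/
def SSat (S : Type) [Semigroup S] (u v : Word) : Prop :=
  ∀ φ : Var → S, evalS φ u = evalS φ v

/-- Property (C_ℓ) for a monoid: every word in two variables of height at most
`ℓ` can form an identity of `M` only with a word of the same type. -/
def MPropC (M : Type) [Monoid M] (ℓ : ℕ) : Prop :=
  ∀ x y : Var, x ≠ y → ∀ u : Word, u ≠ [] → (∀ c ∈ u, c = x ∨ c = y) →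
    height u ≤ ℓ → ∀ v : Word, MSat M u v → sameType u v

/-- Property (C_ℓ) for a semigroup. -/
def SPropC (S : Type) [Semigroup S] (ℓ : ℕ) : Prop :=
  ∀ x y : Var, x ≠ y → ∀ u : Word, u ≠ [] → (∀ c ∈ u, c = x ∨ c = y) →
    height u ≤ ℓ → ∀ v : Word, SSat S u v → sameType u v

/-- A monoid is finitely based if some finite set of identities it satisfies
entails all its identities (in every monoid). -/
def MonoidFB (M : Type) [Monoid M] : Prop :=
  ∃ Sig : Finset (Word × Word),
    (∀ p ∈ Sig, MSat M p.1 p.2) ∧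
    ∀ (N : Type) [Monoid N], (∀ p ∈ Sig, MSat N p.1 p.2) →
      ∀ u v : Word, MSat M u v → MSat N u v

/-- A semigroup is finitely based if some finite set of identities (between
nonempty words) it satisfies entails all its identities (in every semigroup). -/
def SemigroupFB (S : Type) [Semigroup S] : Prop :=
  ∃ Sig : Finset (Word × Word),
    (∀ p ∈ Sig, p.1 ≠ [] ∧ p.2 ≠ [] ∧ SSat S p.1 p.2) ∧
    ∀ (T : Type) [Semigroup T], (∀ p ∈ Sig, SSat T p.1 p.2) →
      ∀ u v : Word, u ≠ [] → v ≠ [] → SSat S u v → SSat T u v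

/-- `B` is a block of `u` occurring as `u = p ++ B ++ s`: it contains no linear
variables of `u` and is maximal with this property. -/
def IsBlockAt (u p B s : Word) : Prop :=
  u = p ++ B ++ s ∧ (∀ c ∈ B, c ∉ lin u) ∧
  (∀ c : Var, p.getLast? = some c → c ∈ lin u) ∧
  (∀ c : Var, s.head? = some c → c ∈ lin u)

/-- The word `Uₙ = (x₁⋯xₙ)(xₙ⋯x₁)(x₁⋯xₙ)`. -/
def Uword (n : ℕ) (x : Fin n → Var) : Word :=
  List.ofFn x ++ (List.ofFn x).reverse ++ List.ofFn x

/-- The word `Vₙ = (x₁⋯xₙ)(x₁²x₂²⋯xₙ²)`. -/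
def Vword (n : ℕ) (x : Fin n → Var) : Word :=
  List.ofFn x ++ (List.ofFn x).flatMap (fun c => [c, c])

/-- The generator `a` of `L₄¹`. -/
def genA : FreeMonoid (Fin 2) := FreeMonoid.of 0

/-- The generator `b` of `L₄¹`. -/
def genB : FreeMonoid (Fin 2) := FreeMonoid.of 1

/-- The defining relations of `L₄¹`:
`a² = a`, `b² = b`, `ababa = abab`, `babab = abab`. -/
def L4rel : FreeMonoid (Fin 2) → FreeMonoid (Fin 2) → Prop := fun u v =>
  (u = genA * genA ∧ v = genA) ∨ (u = genB * genB ∧ v = genB) ∨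
  (u = genA * genB * genA * genB * genA ∧ v = genA * genB * genA * genB) ∨
  (u = genB * genA * genB * genA * genB ∧ v = genA * genB * genA * genB)

/-- The 9-element monoid `L₄¹ = ⟨a, b, 1 ∣ aa = a, bb = b, abab = 0⟩`,
presented by generators `a, b` and relations
`a² = a`, `b² = b`, `ababa = abab`, `babab = abab`. -/
def L41 : Type := PresentedMonoid L4rel

instance : Monoid L41 := inferInstanceAs (Monoid (PresentedMonoid L4rel))

/-!
The triple `(x₁⋯xₙ, xₙ⋯x₁, x₁²⋯xₙ²)` evaluated in a monoid `M` is the product, in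
`M × Mᵐᵒᵖ × M`, of the triples `(xᵢ, xᵢ, xᵢ²)`; so `Uₙ ≈ Vₙ` holds in `M` once it holds on an
invariant set of triples containing `1` and stable under left multiplication by these generators.
`L₄¹` acts faithfully by left multiplication on the nine normal forms
`1, a, b, ab, ba, aba, bab, baba, 0`, which makes it a finite monoid with decidable equality; the
triples it generates (38 of them) are then computed and checked by evaluation.
-/

section PalindromeIdentity

variable {M : Type} [Monoid M]

open MulOpposite

theorem msat_Uword_Vword_of
    (h : ∀ L : List M,
      L.prod * L.reverse.prod * L.prod = L.prod * (L.flatMap fun m => [m, m]).prod)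
    (n : ℕ) (x : Fin n → Var) : MSat M (Uword n x) (Vword n x) := by
  intro φ
  have hV : (Vword n x).map φ =
      (List.ofFn x).map φ ++ ((List.ofFn x).map φ).flatMap fun m => [m, m] := by
    simp only [Vword, List.map_append, List.map_flatMap, List.flatMap_map]
    rfl
  rw [hV, Uword, List.map_append, List.map_append, List.map_reverse]
  simpa only [List.prod_append] using h ((List.ofFn x).map φ)

def palindromeTriple (m : M) : M × Mᵐᵒᵖ × M := (m, op m, m * m)

theorem list_prod_map_palindromeTriple (L : List M) :
    (L.map palindromeTriple).prod =
      (L.prod, op L.reverse.prod, (L.flatMap fun m => [m, m]).prod) := by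
  induction L with
  | nil => rfl
  | cons m L ih => simp [ih, palindromeTriple, mul_assoc]

theorem prod_mul_prod_reverse_mul_prod_of_invariant (S : Set (M × Mᵐᵒᵖ × M))
    (one_mem : 1 ∈ S)
    (mul_mem : ∀ m, ∀ t ∈ S, palindromeTriple m * t ∈ S)
    (eq_of_mem : ∀ t ∈ S, t.1 * t.2.1.unop * t.1 = t.1 * t.2.2) (L : List M) :
    L.prod * L.reverse.prod * L.prod = L.prod * (L.flatMap fun m => [m, m]).prod := by
  have hL : (L.map palindromeTriple).prod ∈ S := by
    induction L with
    | nil => exact one_mem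
    | cons m L ih => exact mul_mem m _ ih
  simpa [list_prod_map_palindromeTriple] using eq_of_mem _ hL

end PalindromeIdentity

namespace L41

def gen (c : Fin 2) : L41 := PresentedMonoid.of L4rel c

theorem gen_mul_self : ∀ c : Fin 2, gen c * gen c = gen c
  | 0 => PresentedMonoid.mk_eq_mk_of_rel (Or.inl ⟨rfl, rfl⟩)
  | 1 => PresentedMonoid.mk_eq_mk_of_rel (Or.inr (Or.inl ⟨rfl, rfl⟩))

theorem ababa_eq_abab :
    gen 0 * gen 1 * gen 0 * gen 1 * gen 0 = gen 0 * gen 1 * gen 0 * gen 1 :=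
  PresentedMonoid.mk_eq_mk_of_rel (Or.inr (Or.inr (Or.inl ⟨rfl, rfl⟩)))

theorem babab_eq_abab :
    gen 1 * gen 0 * gen 1 * gen 0 * gen 1 = gen 0 * gen 1 * gen 0 * gen 1 :=
  PresentedMonoid.mk_eq_mk_of_rel (Or.inr (Or.inr (Or.inr ⟨rfl, rfl⟩)))

inductive NormalForm
  | one | a | b | ab | ba | aba | bab | baba | zero
  deriving DecidableEq

namespace NormalForm

instance : Fintype NormalForm :=
  Fintype.ofList [one, a, b, ab, ba, aba, bab, baba, zero] (by intro k; cases k <;> simp)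

def leftMulA : NormalForm → NormalForm
  | one | a => a
  | b | ab => ab
  | ba | aba => aba
  | bab | baba | zero => zero

def leftMulB : NormalForm → NormalForm
  | one | b => b
  | a | ba => ba
  | ab | bab => bab
  | aba | baba => baba
  | zero => zero

def genAct : Fin 2 → Function.End NormalForm
  | 0 => leftMulA
  | 1 => leftMulB

theorem genAct_rel (u v : FreeMonoid (Fin 2)) (h : L4rel u v) :
    FreeMonoid.lift genAct u = FreeMonoid.lift genAct v := by
  rcases h with ⟨rfl, rfl⟩ | ⟨rfl, rfl⟩ | ⟨rfl, rfl⟩ | ⟨rfl, rfl⟩ <;> funext k <;> cases k <;> rfl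

def toL41 : NormalForm → L41
  | one => 1
  | a => gen 0
  | b => gen 1
  | ab => gen 0 * gen 1
  | ba => gen 1 * gen 0
  | aba => gen 0 * gen 1 * gen 0
  | bab => gen 1 * gen 0 * gen 1
  | baba => gen 1 * gen 0 * gen 1 * gen 0
  | zero => gen 0 * gen 1 * gen 0 * gen 1

theorem toL41_genAct : ∀ (c : Fin 2) (k : NormalForm), toL41 (genAct c k) = gen c * toL41 k
  | 0, k => by
    cases k <;>
      simp only [genAct, leftMulA, toL41, mul_one, ← mul_assoc, gen_mul_self, ababa_eq_abab]
  | 1, k => by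
    cases k <;>
      simp only [genAct, leftMulB, toL41, mul_one, ← mul_assoc, gen_mul_self, babab_eq_abab]

end NormalForm

open NormalForm

def act : L41 →* Function.End NormalForm := PresentedMonoid.lift genAct genAct_rel

def normalForm (m : L41) : NormalForm := act m one

theorem normalForm_toL41 (k : NormalForm) : (toL41 k).normalForm = k := by
  cases k <;> decide

theorem normalForm_gen_mul (c : Fin 2) (m : L41) :
    (gen c * m).normalForm = genAct c m.normalForm := by
  rw [normalForm, map_mul]
  rfl

theorem toL41_normalForm (m : L41) : toL41 m.normalForm = m := by
  have hm : m ∈ Submonoid.closure (Set.range gen) := by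
    rw [show Submonoid.closure (Set.range gen) = ⊤ from PresentedMonoid.closure_range_of L4rel]
    trivial
  induction hm using Submonoid.closure_induction_left with
  | one => rfl
  | mul_left x hx y _ ih =>
    obtain ⟨c, rfl⟩ := hx
    rw [normalForm_gen_mul, toL41_genAct, ih]

def equivNormalForm : L41 ≃ NormalForm :=
  ⟨normalForm, toL41, toL41_normalForm, normalForm_toL41⟩

instance : DecidableEq L41 := equivNormalForm.decidableEq

instance : Fintype L41 := Fintype.ofEquiv NormalForm equivNormalForm.symm

-- Four rounds already reach the fixed point, as `palindromeTriple_mul_mem` certifies.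
def palindromeTriples : Finset (L41 × L41ᵐᵒᵖ × L41) :=
  (fun S => S ∪ Finset.univ.biUnion fun m => S.image (palindromeTriple m * ·))^[4] {1}

theorem palindromeTriple_mul_mem :
    ∀ m, ∀ t ∈ palindromeTriples, palindromeTriple m * t ∈ palindromeTriples := by
  decide +kernel

theorem eq_of_mem_palindromeTriples :
    ∀ t ∈ palindromeTriples, t.1 * t.2.1.unop * t.1 = t.1 * t.2.2 := by
  decide +kernel

end L41

theorem stmt2_general (n : ℕ) (x : Fin n → Var) :
    MSat L41 (Uword n x) (Vword n x) :=
  msat_Uword_Vword_of (prod_mul_prod_reverse_mul_prod_of_invariant _ (by decide +kernel)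
    L41.palindromeTriple_mul_mem L41.eq_of_mem_palindromeTriples) n x

/-- For every `n > 0`, the monoid `L₄¹` satisfies the identity
`Uₙ ≈ Vₙ`. -/
theorem stmt2 (n : ℕ) (hn : 0 < n) (x : Fin n → Var) (hx : Function.Injective x) :
    MSat L41 (Uword n x) (Vword n x) :=
  stmt2_general n x
end

section
/- Let u and v be words (possibly empty) with con(u) = con(v). Then u and v are of the same type if and only if for every three pairwise distinct variables x, y, z (not required to occur in u), the words u(x,y,z) and v(x,y,z) are of the same type. -/
/-!
Collapsing every run of a word commutes with deleting variables, up to collapsing once more;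
this gives the forward direction. Conversely, two distinct collapsed words split as `p ++ w₁`
and `p ++ w₂` with different first letters of `w₁` and `w₂`. Keep the last letter of `p` and
these two first letters (at most three variables, padded to exactly three): since a collapsed
word has no two equal neighbours, the two deletions still collapse to a common word coming from
`p`, followed by words with different first letters.
-/

namespace List

variable {α : Type*}

theorem head?_destutter' (R : α → α → Prop) [DecidableRel R] (l : List α) (a : α) :
    (l.destutter' R a).head? = some a := by
  induction l generalizing a with
  | nil => rfl
  | cons b l ih =>
    rw [destutter'_cons]
    split_ifs
    · rfl
    · exact ih a

theorem head?_destutter (R : α → α → Prop) [DecidableRel R] (l : List α) :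
    (l.destutter R).head? = l.head? := by
  cases l with
  | nil => rfl
  | cons a l => exact head?_destutter' R l a

theorem head?_filter_of_forall_mem (P : α → Bool) {l : List α} (h : ∀ y ∈ l.head?, P y) :
    (l.filter P).head? = l.head? := by
  cases l <;> simp_all

theorem getLast?_filter_of_forall_mem (P : α → Bool) {l : List α}
    (h : ∀ y ∈ l.getLast?, P y) : (l.filter P).getLast? = l.getLast? := by
  rw [← head?_reverse, ← filter_reverse, ← head?_reverse]
  exact head?_filter_of_forall_mem P (by rwa [head?_reverse])

theorem exists_append_append_head?_ne :
    ∀ {u v : List α}, u ≠ v →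
      ∃ p w₁ w₂, u = p ++ w₁ ∧ v = p ++ w₂ ∧ w₁.head? ≠ w₂.head?
  | [], [], h => absurd rfl h
  | [], b :: v, _ => ⟨[], [], b :: v, rfl, rfl, by simp⟩
  | a :: u, [], _ => ⟨[], a :: u, [], rfl, rfl, by simp⟩
  | a :: u, b :: v, h => by
    by_cases hab : a = b
    · subst hab
      obtain ⟨p, w₁, w₂, rfl, rfl, hw⟩ := exists_append_append_head?_ne (u := u) (v := v)
        (fun huv => h (huv ▸ rfl))
      exact ⟨a :: p, w₁, w₂, rfl, rfl, hw⟩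
    · exact ⟨[], a :: u, b :: v, rfl, rfl, by simpa using hab⟩

variable [DecidableEq α]

theorem destutter_ne_cons (a : α) (l : List α) :
    (a :: l).destutter (· ≠ ·) =
      if l.head? = some a then l.destutter (· ≠ ·) else a :: l.destutter (· ≠ ·) := by
  cases l with
  | nil => simp
  | cons b l =>
    by_cases hab : a = b
    · subst hab
      simp [destutter_cons']
    · simp [hab, Ne.symm hab, destutter_cons']

theorem destutter_ne_cons_cons (a : α) (l : List α) :
    (a :: a :: l).destutter (· ≠ ·) = (a :: l).destutter (· ≠ ·) := by
  simp [destutter_ne_cons a (a :: l)]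

theorem destutter_ne_append {l₁ l₂ : List α}
    (h : ∀ x ∈ l₁.getLast?, ∀ y ∈ l₂.head?, x ≠ y) :
    (l₁ ++ l₂).destutter (· ≠ ·) = l₁.destutter (· ≠ ·) ++ l₂.destutter (· ≠ ·) := by
  induction l₁ with
  | nil => rfl
  | cons a t ih =>
    cases t with
    | nil =>
      have : l₂.head? ≠ some a := fun h' => h a (by simp) a h' rfl
      simp [destutter_ne_cons a l₂, this]
    | cons b t =>
      rw [cons_append, destutter_ne_cons, destutter_ne_cons a (b :: t), ih h]
      split_ifs <;> simp_all

section Filter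

variable (P : α → Bool)

theorem destutter_ne_filter_cons_congr (a : α) {l l' : List α}
    (h : (l.filter P).destutter (· ≠ ·) = (l'.filter P).destutter (· ≠ ·)) :
    ((a :: l).filter P).destutter (· ≠ ·) = ((a :: l').filter P).destutter (· ≠ ·) := by
  by_cases hPa : P a
  · rw [filter_cons_of_pos hPa, filter_cons_of_pos hPa, destutter_ne_cons, destutter_ne_cons,
      ← head?_destutter (· ≠ ·) (l.filter P), ← head?_destutter (· ≠ ·) (l'.filter P), h]
  · rwa [filter_cons_of_neg hPa, filter_cons_of_neg hPa]

theorem destutter_ne_filter_destutter_ne (l : List α) :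
    ((l.destutter (· ≠ ·)).filter P).destutter (· ≠ ·) = (l.filter P).destutter (· ≠ ·) := by
  induction l with
  | nil => rfl
  | cons a t ih =>
    rw [destutter_ne_cons]
    split_ifs with ht
    · obtain ⟨r, rfl⟩ : ∃ r, t = a :: r := by
        cases t <;> simp_all
      rw [ih]
      by_cases hPa : P a <;> simp [hPa, destutter_ne_cons_cons]
    · exact destutter_ne_filter_cons_congr P a ih

theorem destutter_ne_filter_append {l₁ l₂ : List α}
    (h : ∀ x ∈ l₁.getLast?, ∀ y ∈ l₂.head?, x ≠ y)
    (h₁ : ∀ x ∈ l₁.getLast?, P x) (h₂ : ∀ y ∈ l₂.head?, P y) :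
    ((l₁ ++ l₂).filter P).destutter (· ≠ ·) =
      (l₁.filter P).destutter (· ≠ ·) ++ (l₂.filter P).destutter (· ≠ ·) := by
  rw [filter_append, destutter_ne_append]
  rwa [getLast?_filter_of_forall_mem P h₁, head?_filter_of_forall_mem P h₂]

end Filter

end List

theorem Finset.exists_ne_ne_ne_subset_of_card_le_three {α : Type*} [DecidableEq α] [Infinite α]
    (s : Finset α) (hs : s.card ≤ 3) : ∃ x y z, x ≠ y ∧ y ≠ z ∧ x ≠ z ∧ s ⊆ {x, y, z} := by
  obtain ⟨t, hst, ht⟩ := Infinite.exists_superset_card_eq s 3 hs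
  obtain ⟨x, y, z, hxy, hxz, hyz, rfl⟩ := Finset.card_eq_three.mp ht
  exact ⟨x, y, z, hxy, hyz, hxz, hst⟩

theorem List.exists_ne_ne_ne_destutter_ne_filter_ne {α : Type*} [DecidableEq α] [Infinite α]
    {u v : List α} (hu : u.IsChain (· ≠ ·)) (hv : v.IsChain (· ≠ ·)) (huv : u ≠ v) :
    ∃ x y z, x ≠ y ∧ y ≠ z ∧ x ≠ z ∧
      (u.filter (· ∈ [x, y, z])).destutter (· ≠ ·) ≠
        (v.filter (· ∈ [x, y, z])).destutter (· ≠ ·) := by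
  obtain ⟨p, w₁, w₂, rfl, rfl, hw⟩ := exists_append_append_head?_ne huv
  let s := p.getLast?.toFinset ∪ w₁.head?.toFinset ∪ w₂.head?.toFinset
  have hs : s.card ≤ 3 := by
    grw [Finset.card_union_le, Finset.card_union_le]
    simp only [Option.card_toFinset]
    cases p.getLast? <;> cases w₁.head? <;> cases w₂.head? <;> simp
  obtain ⟨x, y, z, hxy, hyz, hxz, hsub⟩ := s.exists_ne_ne_ne_subset_of_card_le_three hs
  refine ⟨x, y, z, hxy, hyz, hxz, fun h => hw ?_⟩
  have hmem : ∀ c ∈ s, decide (c ∈ [x, y, z]) := fun c hc => by simpa using hsub hc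
  have hp : ∀ c ∈ p.getLast?, decide (c ∈ [x, y, z]) := fun c hc => hmem c (by simp [s, hc])
  have h₁ : ∀ c ∈ w₁.head?, decide (c ∈ [x, y, z]) := fun c hc => hmem c (by simp [s, hc])
  have h₂ : ∀ c ∈ w₂.head?, decide (c ∈ [x, y, z]) := fun c hc => hmem c (by simp [s, hc])
  rw [destutter_ne_filter_append _ (isChain_append.mp hu).2.2 hp h₁,
    destutter_ne_filter_append _ (isChain_append.mp hv).2.2 hp h₂] at h
  have hhead := congrArg head? (append_cancel_left h)
  rwa [head?_destutter, head?_destutter, head?_filter_of_forall_mem _ h₁,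
    head?_filter_of_forall_mem _ h₂] at hhead

theorem stmt5_general (u v : Word) :
    sameType u v ↔
      ∀ x y z : Var, x ≠ y → y ≠ z → x ≠ z →
        sameType (del u [x, y, z]) (del v [x, y, z]) := by
  simp only [sameType, del]
  constructor
  · intro h x y z _ _ _
    rw [← List.destutter_ne_filter_destutter_ne _ u, ← List.destutter_ne_filter_destutter_ne _ v, h]
  · intro h
    by_contra huv
    obtain ⟨x, y, z, hxy, hyz, hxz, hne⟩ := List.exists_ne_ne_ne_destutter_ne_filter_ne
      (u.isChain_destutter _) (v.isChain_destutter _) huv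
    apply hne
    rw [List.destutter_ne_filter_destutter_ne, List.destutter_ne_filter_destutter_ne]
    exact h x y z hxy hyz hxz

/-- Two words with the same content are of the same type iff all
their three-variable deletions are of the same type. -/
theorem stmt5 (u v : Word) (hcon : con u = con v) :
    sameType u v ↔
      ∀ x y z : Var, x ≠ y → y ≠ z → x ≠ z →
        sameType (del u [x, y, z]) (del v [x, y, z]) :=
  stmt5_general u v
end

section
/- Let n > 2 and let u be a word in fewer than n−1 distinct variables such that for some pairwise distinct variables x, y, z some block B of u satisfies that B(x,y,z) is of the form x⁺y⁺z⁺x⁺. Let Θ: 𝔄 → 𝔄⁺ be a substitution such that for all a, b ∈ con(u), if Θ(a) and Θ(b) are powers of the same variable then a = b. If Θ(u) is of the same type as Uₙ = (x₁x₂⋯xₙ)(xₙxₙ₋₁⋯x₁)(x₁x₂⋯xₙ) (with x₁,…,xₙ distinct variables), then: (a) if y occurs in u to the left of B then z does not occur in u to the right of B, and (b) if z occurs in u to the left of B then y does not occur in u to the right of B. -/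
namespace Stmt9


/-- monotone on an interval from step facts -/
theorem mono_of_step (f : ℕ → ℕ) :
    ∀ d a, (∀ t, a ≤ t → t < a + d → f t ≤ f (t + 1)) → f a ≤ f (a + d) := by
  intro d
  induction d with
  | zero => intro a _; simp
  | succ d ih =>
    intro a h
    have h1 := ih a (fun t ht ht' => h t ht (by omega))
    have h2 := h (a + d) (by omega) (by omega)
    have e : a + (d + 1) = a + d + 1 := by omega
    rw [e]
    omega

/-- intermediate value for step functions -/
theorem ivt_of_step (f : ℕ → ℕ) :
    ∀ d a C, (∀ t, a ≤ t → t < a + d → f (t + 1) ≤ f t + 1) → f a ≤ C → C ≤ f (a + d) →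
      ∃ q, a ≤ q ∧ q ≤ a + d ∧ f q = C := by
  intro d
  induction d with
  | zero =>
    intro a C _ h1 h2
    simp only [Nat.add_zero] at h2
    exact ⟨a, le_refl _, by omega, by omega⟩
  | succ d ih =>
    intro a C h h1 h2
    have e : a + (d + 1) = a + d + 1 := by omega
    rw [e] at h2
    by_cases hC : C ≤ f (a + d)
    · obtain ⟨q, hq1, hq2, hq3⟩ := ih a C (fun t ht ht' => h t ht (by omega)) h1 hC
      exact ⟨q, hq1, by omega, hq3⟩
    · have := h (a + d) (by omega) (by omega)
      refine ⟨a + d + 1, by omega, by omega, by omega⟩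

/-- find an exact step from level A to level A+1 -/
theorem switch_of_step (f : ℕ → ℕ) :
    ∀ d a A, (∀ t, a ≤ t → t < a + d → f t ≤ f (t + 1) ∧ f (t + 1) ≤ f t + 1) →
      f a = A → f (a + d) = A + 1 →
      ∃ t, a ≤ t ∧ t < a + d ∧ f t = A ∧ f (t + 1) = A + 1 := by
  intro d
  induction d with
  | zero =>
    intro a A _ h1 h2
    simp only [Nat.add_zero] at h2
    omega
  | succ d ih =>
    intro a A h h1 h2
    have e : a + (d + 1) = a + d + 1 := by omega
    rw [e] at h2
    by_cases hA : f (a + 1) = A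
    · obtain ⟨t, ht1, ht2, ht3, ht4⟩ := ih (a + 1) A
        (fun t ht ht' => h t (by omega) (by omega)) hA (by
          have e2 : a + 1 + d = a + d + 1 := by omega
          rw [e2, h2])
      exact ⟨t, by omega, by omega, ht3, ht4⟩
    · have h3 := h a (by omega) (by omega)
      exact ⟨a, le_refl _, by omega, h1, by omega⟩

/-- all entries equal when all adjacent entries are equal -/
theorem const_of_adj (w : Word) (h : ∀ r, r + 1 < w.length → w.getD r 0 = w.getD (r + 1) 0) :
    ∀ r, r < w.length → w.getD r 0 = w.getD 0 0 := by
  intro r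
  induction r with
  | zero => intro _; rfl
  | succ r ih =>
    intro hr
    have h1 := h r hr
    have h2 := ih (by omega)
    rw [← h1, h2]

/-- head of destutter' -/
theorem destutter'_head (l : List Var) : ∀ c : Var, ∃ r, l.destutter' (· ≠ ·) c = c :: r := by
  induction l with
  | nil => intro c; exact ⟨[], rfl⟩
  | cons b t ih =>
    intro c
    by_cases h : c ≠ b
    · exact ⟨t.destutter' (· ≠ ·) b, List.destutter'_cons_pos _ h⟩
    · obtain ⟨r, hr⟩ := ih c
      exact ⟨r, by rw [List.destutter'_cons_neg _ h, hr]⟩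

/-- shifted island function -/
def shiftf (c : ℕ) (f' : ℕ → ℕ) : ℕ → ℕ
  | 0 => 0
  | p + 1 => f' p + c

@[simp] theorem shiftf_zero (c : ℕ) (f' : ℕ → ℕ) : shiftf c f' 0 = 0 := rfl
@[simp] theorem shiftf_succ (c : ℕ) (f' : ℕ → ℕ) (p : ℕ) : shiftf c f' (p + 1) = f' p + c := rfl

/-- island function for `a :: l` relative to `destutter'`. -/
theorem exists_isl' (l : List Var) : ∀ a : Var, ∃ f : ℕ → ℕ, f 0 = 0 ∧
    (∀ p, p + 1 < l.length + 1 →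
      (((a :: l).getD p 0 = (a :: l).getD (p + 1) 0 → f (p + 1) = f p) ∧
       ((a :: l).getD p 0 ≠ (a :: l).getD (p + 1) 0 → f (p + 1) = f p + 1))) ∧
    (∀ p, p < l.length + 1 → f p < (l.destutter' (· ≠ ·) a).length ∧
      (l.destutter' (· ≠ ·) a).getD (f p) 0 = (a :: l).getD p 0) ∧
    f l.length + 1 = (l.destutter' (· ≠ ·) a).length := by
  induction l with
  | nil =>
    intro a
    refine ⟨fun _ => 0, rfl, by simp, ?_, by simp⟩
    intro p hp
    have : p = 0 := by simpa using hp
    subst this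
    simp
  | cons b t ih =>
    intro a
    obtain ⟨f', h0', hstep', hget', hlast'⟩ := ih b
    by_cases hab : a = b
    · have hd : (b :: t).destutter' (· ≠ ·) a = t.destutter' (· ≠ ·) b := by
        rw [List.destutter'_cons]
        simp [hab]
      refine ⟨shiftf 0 f', rfl, ?_, ?_, ?_⟩
      · intro p hp
        cases p with
        | zero =>
          refine ⟨fun _ => by simp [h0'], fun hne => absurd ?_ hne⟩
          simpa using hab
        | succ q =>
          have h1 := hstep' q (by simpa using hp)
          constructor
          · intro he
            simp only [List.getD_cons_succ] at he ⊢
            simp only [shiftf_succ]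
            rw [h1.1 (by simpa using he)]
          · intro he
            simp only [List.getD_cons_succ] at he ⊢
            simp only [shiftf_succ]
            rw [h1.2 (by simpa using he)]
      · intro p hp
        cases p with
        | zero =>
          have h1 := hget' 0 (by omega)
          rw [h0'] at h1
          refine ⟨by rw [hd]; simpa using h1.1, ?_⟩
          rw [hd]
          have h2 := h1.2
          simp only [List.getD_cons_zero] at h2 ⊢
          simp only [shiftf_zero]
          rw [h2, hab]
        | succ q =>
          have h1 := hget' q (by simpa using hp)
          rw [hd]
          simpa using h1
      · rw [hd]
        cases t with
        | nil => simpa using hlast'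
        | cons c t2 => simpa using hlast'
    · have hd : (b :: t).destutter' (· ≠ ·) a = a :: t.destutter' (· ≠ ·) b :=
        List.destutter'_cons_pos _ hab
      refine ⟨shiftf 1 f', rfl, ?_, ?_, ?_⟩
      · intro p hp
        cases p with
        | zero =>
          refine ⟨fun he => absurd ?_ hab, fun _ => by simp [h0']⟩
          simpa using he
        | succ q =>
          have := hstep' q (by simpa using hp)
          constructor
          · intro he
            simp only [List.getD_cons_succ] at he ⊢
            simp only [shiftf_succ]
            cases q with
            | zero => simp [this.1 (by simpa using he), h0']
            | succ q2 => rw [this.1 (by simpa using he)]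
          · intro he
            simp only [List.getD_cons_succ] at he ⊢
            simp only [shiftf_succ]
            cases q with
            | zero => rw [this.2 (by simpa using he)]
            | succ q2 => rw [this.2 (by simpa using he)]
      · intro p hp
        cases p with
        | zero => simp [hd]
        | succ q =>
          have h1 := hget' q (by simpa using hp)
          rw [hd]
          constructor
          · simp only [shiftf_succ, List.length_cons]
            omega
          · simp only [shiftf_succ, List.getD_cons_succ]
            exact h1.2
      · rw [hd]
        cases t with
        | nil => simpa using hlast'
        | cons c t2 => simpa using hlast'

/-- The island function: a run-length position map from a word to its destutter. -/
theorem exists_isl (w : Word) : ∃ f : ℕ → ℕ, f 0 = 0 ∧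
    (∀ p, p + 1 < w.length →
      ((w.getD p 0 = w.getD (p + 1) 0 → f (p + 1) = f p) ∧
       (w.getD p 0 ≠ w.getD (p + 1) 0 → f (p + 1) = f p + 1))) ∧
    (∀ p, p < w.length → f p < (w.destutter (· ≠ ·)).length ∧
      (w.destutter (· ≠ ·)).getD (f p) 0 = w.getD p 0) ∧
    (w ≠ [] → f (w.length - 1) + 1 = (w.destutter (· ≠ ·)).length) := by
  cases w with
  | nil => exact ⟨fun _ => 0, rfl, by simp, by simp, by simp⟩
  | cons a l =>
    obtain ⟨f, h0, hstep, hget, hlast⟩ := exists_isl' l a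
    rw [← List.destutter_cons'] at hget hlast
    exact ⟨f, h0, by simpa using hstep, by simpa using hget, fun _ => by simpa using hlast⟩


theorem const_of_step (f : ℕ → ℕ) :
    ∀ d a, (∀ t, a ≤ t → t < a + d → f (t + 1) = f t) → f (a + d) = f a := by
  intro d
  induction d with
  | zero => intro a _; simp
  | succ d ih =>
    intro a h
    have h1 := ih a (fun t ht ht' => h t ht (by omega))
    have h2 := h (a + d) (by omega) (by omega)
    have e : a + (d + 1) = a + d + 1 := by omega
    rw [e, h2, h1]


def valn (n q : ℕ) : ℕ := if q < n then q else if q < 2 * n - 1 then 2 * n - 2 - q else q - (2 * n - 2)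

theorem valn_lt {n q : ℕ} (hn : 2 < n) (hq : q < 3 * n - 2) : valn n q < n := by
  unfold valn; split_ifs <;> omega

theorem valn_spec {n q : ℕ} (hn : 2 < n) (hq : q < 3 * n - 2) :
    (q < n ∧ valn n q = q) ∨ (n ≤ q ∧ q < 2 * n - 1 ∧ valn n q = 2 * n - 2 - q) ∨
      (2 * n - 1 ≤ q ∧ valn n q = q - (2 * n - 2)) := by
  unfold valn; split_ifs <;> omega

def Tlist (n : ℕ) (xs : Fin n → Var) : Word :=
  List.ofFn xs ++ ((List.ofFn xs).reverse.tail ++ (List.ofFn xs).tail)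

theorem Tlist_length {n : ℕ} (hn : 2 < n) (xs : Fin n → Var) :
    (Tlist n xs).length = 3 * n - 2 := by
  simp [Tlist]; omega

theorem xs_congr {n : ℕ} (xs : Fin n → Var) {a b : ℕ} (ha : a < n) (hb : b < n) (h : a = b) :
    xs ⟨a, ha⟩ = xs ⟨b, hb⟩ := by subst h; rfl

theorem Tlist_getD {n : ℕ} (hn : 2 < n) (xs : Fin n → Var) {q : ℕ} (hq : q < 3 * n - 2) :
    (Tlist n xs).getD q 0 = xs ⟨valn n q, valn_lt hn hq⟩ := by
  have l1 : (List.ofFn xs).length = n := by simp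
  have l2 : (List.ofFn xs).reverse.tail.length = n - 1 := by simp
  have l3 : (List.ofFn xs).tail.length = n - 1 := by simp
  rcases valn_spec hn hq with ⟨h1, h2⟩ | ⟨h1, h1', h2⟩ | ⟨h1, h2⟩
  · rw [Tlist, List.getD_append _ _ _ _ (by omega)]
    rw [List.getD_eq_getElem _ _ (by omega)]
    rw [List.getElem_ofFn]
    exact xs_congr xs _ _ h2.symm
  · rw [Tlist, List.getD_append_right _ _ _ _ (by omega),
      List.getD_append _ _ _ _ (by omega)]
    rw [List.getD_eq_getElem _ _ (by omega)]
    rw [List.getElem_tail, List.getElem_reverse]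
    rw [List.getElem_ofFn]
    exact xs_congr xs _ _ (by simp only [l1]; omega)
  · rw [Tlist, List.getD_append_right _ _ _ _ (by omega),
      List.getD_append_right _ _ _ _ (by omega)]
    rw [List.getD_eq_getElem _ _ (by omega)]
    rw [List.getElem_tail]
    rw [List.getElem_ofFn]
    exact xs_congr xs _ _ (by simp only [l1, l2]; omega)

theorem Tlist_chain' {n : ℕ} (hn : 2 < n) (xs : Fin n → Var) (hxs : Function.Injective xs) :
    (Tlist n xs).Chain' (· ≠ ·) := by
  rw [show (Tlist n xs).Chain' (· ≠ ·) ↔ (Tlist n xs).IsChain (· ≠ ·) from Iff.rfl, List.isChain_iff_getElem]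
  intro i h
  have hlen := Tlist_length hn xs
  rw [hlen] at h
  have hi : i < 3 * n - 2 := by omega
  have hi1 : i + 1 < 3 * n - 2 := by omega
  rw [← List.getD_eq_getElem _ 0, ← List.getD_eq_getElem _ 0]
  rw [Tlist_getD hn xs hi, Tlist_getD hn xs hi1]
  intro he
  have := hxs he
  have h2 : valn n i = valn n (i + 1) := congrArg Fin.val this
  rcases valn_spec hn hi with ⟨a1, a2⟩ | ⟨a1, a1', a2⟩ | ⟨a1, a2⟩ <;>
    rcases valn_spec hn hi1 with ⟨b1, b2⟩ | ⟨b1, b1', b2⟩ | ⟨b1, b2⟩ <;> omega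

/-- removing a stuttered duplicate doesn't change the destutter -/
theorem destutter'_dedup (a : Var) : ∀ (l : List Var) (b : Var) (r : List Var),
    (l ++ a :: a :: r).destutter' (· ≠ ·) b = (l ++ a :: r).destutter' (· ≠ ·) b := by
  intro l
  induction l with
  | nil =>
    intro b r
    by_cases h : b = a
    · subst h
      simp only [List.nil_append]
      rw [List.destutter'_cons, if_neg (by simp)]
    · simp only [List.nil_append]
      rw [List.destutter'_cons, if_pos (by exact h), List.destutter'_cons, if_neg (by simp),
        List.destutter'_cons, if_pos (by exact h)]
  | cons c l ih =>
    intro b r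
    simp only [List.cons_append]
    by_cases h : b = c
    · rw [List.destutter'_cons, if_neg (by simp [h]), List.destutter'_cons, if_neg (by simp [h])]
      exact ih b r
    · rw [List.destutter'_cons, if_pos (by exact h), List.destutter'_cons, if_pos (by exact h)]
      rw [ih c r]

theorem destutter_dedup (L : List Var) (a : Var) (r : List Var) :
    (L ++ a :: a :: r).destutter (· ≠ ·) = (L ++ a :: r).destutter (· ≠ ·) := by
  cases L with
  | nil =>
    simp only [List.nil_append]
    rw [List.destutter_cons', List.destutter_cons']
    rw [List.destutter'_cons, if_neg (by simp)]
  | cons c L =>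
    simp only [List.cons_append]
    rw [List.destutter_cons', List.destutter_cons']
    have := destutter'_dedup a L c r
    simpa using this
theorem destutter_Uword {n : ℕ} (hn : 2 < n) (xs : Fin n → Var) (hxs : Function.Injective xs) :
    (Uword n xs).destutter (· ≠ ·) = Tlist n xs := by
  set L := List.ofFn xs with hLdef
  have hLlen : L.length = n := by simp [hLdef]
  have hLne : L ≠ [] := by
    intro h
    rw [h] at hLlen
    simp at hLlen
    omega
  set A := L.dropLast with hAdef
  have hAlen : A.length = n - 1 := by simp [hAdef, hLlen]
  have hAne : A ≠ [] := by
    intro h; rw [h] at hAlen; simp at hAlen; omega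
  -- L = A ++ [e]
  set e := L.getLast hLne with hedef
  have hL1 : L = A ++ [e] := (List.dropLast_append_getLast hLne).symm
  -- A = h0 :: A'
  set h0 := A.head hAne with h0def
  set A' := A.tail with hA'def
  have hA1 : A = h0 :: A' := (List.cons_head_tail hAne).symm
  -- L.tail = A' ++ [e] and L = h0 :: (A' ++ [e])
  have hL2 : L = h0 :: (A' ++ [e]) := by
    rw [hL1, hA1]; simp
  have hLtail : L.tail = A' ++ [e] := by rw [hL2]; simp
  -- L.reverse = e :: A.reverse
  have hLrev : L.reverse = e :: A.reverse := by
    rw [hL1]; simp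
  have hLrevtail : L.reverse.tail = A.reverse := by rw [hLrev]; simp
  have hArev : A.reverse = A'.reverse ++ [h0] := by rw [hA1]; simp
  -- assemble
  have hU : Uword n xs = A ++ e :: e :: (A'.reverse ++ h0 :: h0 :: (A' ++ [e])) := by
    show L ++ L.reverse ++ L = _
    rw [hLrev, hArev]
    nth_rewrite 1 [hL1]
    rw [hL2]
    simp [List.append_assoc]
  rw [hU, destutter_dedup]
  have h2 : A ++ e :: (A'.reverse ++ h0 :: h0 :: (A' ++ [e]))
      = (A ++ e :: A'.reverse) ++ h0 :: h0 :: (A' ++ [e]) := by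
    simp [List.append_assoc]
  rw [h2, destutter_dedup]
  have h3 : (A ++ e :: A'.reverse) ++ h0 :: (A' ++ [e]) = Tlist n xs := by
    show _ = L ++ (L.reverse.tail ++ L.tail)
    rw [hLrevtail, hArev, hLtail, hL1]
    simp [List.append_assoc]
  rw [h3]
  exact List.destutter_of_isChain _ _ (Tlist_chain' hn xs hxs)

/-! ### spans of flatMap -/

def Spos (Θ : Var → Word) (u : Word) (k : ℕ) : ℕ := ((u.take k).flatMap Θ).length

theorem Spos_zero (Θ : Var → Word) (u : Word) : Spos Θ u 0 = 0 := by simp [Spos]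

theorem Spos_succ (Θ : Var → Word) (u : Word) (k : ℕ) (hk : k < u.length) :
    Spos Θ u (k + 1) = Spos Θ u k + (Θ (u.getD k 0)).length := by
  unfold Spos
  rw [List.take_succ]
  simp [List.getD_eq_getElem _ _ hk, hk]

theorem Spos_mono (Θ : Var → Word) (u : Word) : ∀ {k k' : ℕ}, k ≤ k' → Spos Θ u k ≤ Spos Θ u k' := by
  have key : ∀ d k, Spos Θ u k ≤ Spos Θ u (k + d) := by
    intro d
    induction d with
    | zero => intro k; exact le_refl _
    | succ d ih =>
      intro k
      have h1 := ih k
      by_cases hk : k + d < u.length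
      · have h2 := Spos_succ Θ u (k + d) hk
        have e : k + (d + 1) = k + d + 1 := by omega
        rw [e, h2]
        omega
      · have e : u.take (k + (d + 1)) = u.take (k + d) := by
          rw [List.take_of_length_le (by omega), List.take_of_length_le (by omega)]
        unfold Spos
        rw [e]
        exact h1
  intro k k' h
  have := key (k' - k) k
  have e : k + (k' - k) = k' := by omega
  rwa [e] at this


theorem Spos_total (Θ : Var → Word) (u : Word) : Spos Θ u u.length = (u.flatMap Θ).length := by
  simp [Spos]

theorem W_getD_span (Θ : Var → Word) (u : Word) (k : ℕ) (hk : k < u.length)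
    (r : ℕ) (hr : r < (Θ (u.getD k 0)).length) :
    (u.flatMap Θ).getD (Spos Θ u k + r) 0 = (Θ (u.getD k 0)).getD r 0 := by
  have hdec : u = u.take k ++ u.getD k 0 :: u.drop (k + 1) := by
    rw [List.getD_eq_getElem _ _ hk]
    conv_lhs => rw [← List.take_append_drop k u]
    congr 1
    exact List.drop_eq_getElem_cons hk
  have hW : u.flatMap Θ = (u.take k).flatMap Θ ++ (Θ (u.getD k 0) ++ (u.drop (k + 1)).flatMap Θ) := by
    conv_lhs => rw [hdec]
    rw [List.flatMap_append, List.flatMap_cons]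
  rw [hW]
  rw [List.getD_append_right _ _ _ _ (by exact Nat.le_add_right _ _ : ((u.take k).flatMap Θ).length ≤ Spos Θ u k + r)]
  have h2 : Spos Θ u k + r - ((u.take k).flatMap Θ).length = r := by
    simp [Spos]
  rw [h2]
  rw [List.getD_append _ _ _ _ hr]

theorem span_bound (Θ : Var → Word) (u : Word) (k : ℕ) (hk : k < u.length)
    (r : ℕ) (hr : r < (Θ (u.getD k 0)).length) :
    Spos Θ u k + r < (u.flatMap Θ).length := by
  have h1 : Spos Θ u k + r < Spos Θ u (k + 1) := by
    rw [Spos_succ Θ u k hk]; omega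
  have h2 : Spos Θ u (k + 1) ≤ Spos Θ u u.length := Spos_mono Θ u (by omega)
  rw [Spos_total] at h2
  omega

theorem pos_decomp (Θ : Var → Word) : ∀ (u : Word) (pp : ℕ), pp < (u.flatMap Θ).length →
    ∃ k, k < u.length ∧ ∃ r, r < (Θ (u.getD k 0)).length ∧ pp = Spos Θ u k + r := by
  intro u
  induction u with
  | nil => intro p h; simp at h
  | cons a t ih =>
    intro p h
    simp only [List.flatMap_cons, List.length_append] at h
    by_cases hp : p < (Θ a).length
    · exact ⟨0, by simp, p, by simpa using hp, by simp [Spos]⟩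
    · obtain ⟨k, hk, r, hr, he⟩ := ih (p - (Θ a).length) (by omega)
      refine ⟨k + 1, by simpa using hk, r, by simpa using hr, ?_⟩
      have : Spos Θ (a :: t) (k + 1) = (Θ a).length + Spos Θ t k := by
        unfold Spos
        simp
      omega



theorem sublist_indices4 {a b c d : Var} {l : Word} (h : List.Sublist [a, b, c, d] l) :
    ∃ i1 i2 i3 i4, i1 < i2 ∧ i2 < i3 ∧ i3 < i4 ∧ i4 < l.length ∧
      l.getD i1 0 = a ∧ l.getD i2 0 = b ∧ l.getD i3 0 = c ∧ l.getD i4 0 = d := by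
  rw [List.sublist_iff_exists_fin_orderEmbedding_get_eq] at h
  obtain ⟨f, hf⟩ := h
  have h0 := hf ⟨0, by simp⟩
  have h1 := hf ⟨1, by simp⟩
  have h2 := hf ⟨2, by simp⟩
  have h3 := hf ⟨3, by simp⟩
  refine ⟨f ⟨0, by simp⟩, f ⟨1, by simp⟩, f ⟨2, by simp⟩, f ⟨3, by simp⟩,
    ?_, ?_, ?_, (f ⟨3, by simp⟩).isLt, ?_, ?_, ?_, ?_⟩
  · exact f.strictMono (by simp [Fin.mk_lt_mk])
  · exact f.strictMono (by simp [Fin.mk_lt_mk])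
  · exact f.strictMono (by simp [Fin.mk_lt_mk])
  · rw [List.getD_eq_getElem _ _ (f ⟨0, by simp⟩).isLt]; simpa using h0.symm
  · rw [List.getD_eq_getElem _ _ (f ⟨1, by simp⟩).isLt]; simpa using h1.symm
  · rw [List.getD_eq_getElem _ _ (f ⟨2, by simp⟩).isLt]; simpa using h2.symm
  · rw [List.getD_eq_getElem _ _ (f ⟨3, by simp⟩).isLt]; simpa using h3.symm

theorem two_indices {t : Var} {l : Word} (h : 2 ≤ l.count t) :
    ∃ i1 i2, i1 < i2 ∧ i2 < l.length ∧ l.getD i1 0 = t ∧ l.getD i2 0 = t := by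
  have hs : List.Sublist (List.replicate 2 t) l := List.replicate_sublist_iff.mpr h
  rw [List.sublist_iff_exists_fin_orderEmbedding_get_eq] at hs
  obtain ⟨f, hf⟩ := hs
  have h0 := hf ⟨0, by simp⟩
  have h1 := hf ⟨1, by simp⟩
  refine ⟨f ⟨0, by simp⟩, f ⟨1, by simp⟩, f.strictMono (by simp [Fin.mk_lt_mk]),
    (f ⟨1, by simp⟩).isLt, ?_, ?_⟩
  · rw [List.getD_eq_getElem _ _ (f ⟨0, by simp⟩).isLt]; simpa using h0.symm
  · rw [List.getD_eq_getElem _ _ (f ⟨1, by simp⟩).isLt]; simpa using h1.symm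

theorem mem_index {t : Var} {l : Word} (h : t ∈ l) :
    ∃ i, i < l.length ∧ l.getD i 0 = t := by
  obtain ⟨i, hi, he⟩ := List.getElem_of_mem h
  exact ⟨i, hi, by rw [List.getD_eq_getElem _ _ hi]; exact he⟩

theorem getD_mem {l : Word} {i : ℕ} (h : i < l.length) : l.getD i 0 ∈ l := by
  rw [List.getD_eq_getElem _ _ h]
  exact List.getElem_mem h

theorem arith_powa (n q1 qP qQ q2 v1 vP vQ v2 : ℕ) (hn : 2 < n)
    (c1 : (q1 < n ∧ v1 = q1) ∨ (n ≤ q1 ∧ q1 < 2*n-1 ∧ v1 = 2*n-2-q1) ∨ (2*n-1 ≤ q1 ∧ v1 = q1 - (2*n-2)))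
    (cP : (qP < n ∧ vP = qP) ∨ (n ≤ qP ∧ qP < 2*n-1 ∧ vP = 2*n-2-qP) ∨ (2*n-1 ≤ qP ∧ vP = qP - (2*n-2)))
    (cQ : (qQ < n ∧ vQ = qQ) ∨ (n ≤ qQ ∧ qQ < 2*n-1 ∧ vQ = 2*n-2-qQ) ∨ (2*n-1 ≤ qQ ∧ vQ = qQ - (2*n-2)))
    (c2 : (q2 < n ∧ v2 = q2) ∨ (n ≤ q2 ∧ q2 < 2*n-1 ∧ v2 = 2*n-2-q2) ∨ (2*n-1 ≤ q2 ∧ v2 = q2 - (2*n-2)))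
    (o1 : q1 < qP) (o2 : qP < qQ) (o3 : qQ < q2)
    (e12 : v1 = v2) (hE : vP < v1) (hF : v1 < vQ) : False := by
  rcases c1 with ⟨a1,a2⟩|⟨a1,a1',a2⟩|⟨a1,a2⟩ <;> rcases cP with ⟨d1,d2⟩|⟨d1,d1',d2⟩|⟨d1,d2⟩ <;>
    rcases cQ with ⟨f1,f2⟩|⟨f1,f1',f2⟩|⟨f1,f2⟩ <;> rcases c2 with ⟨g1,g2⟩|⟨g1,g1',g2⟩|⟨g1,g2⟩ <;> omega

theorem arith_powb (n q1 qP qQ q2 v1 vP vQ v2 : ℕ) (hn : 2 < n)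
    (c1 : (q1 < n ∧ v1 = q1) ∨ (n ≤ q1 ∧ q1 < 2*n-1 ∧ v1 = 2*n-2-q1) ∨ (2*n-1 ≤ q1 ∧ v1 = q1 - (2*n-2)))
    (cP : (qP < n ∧ vP = qP) ∨ (n ≤ qP ∧ qP < 2*n-1 ∧ vP = 2*n-2-qP) ∨ (2*n-1 ≤ qP ∧ vP = qP - (2*n-2)))
    (cQ : (qQ < n ∧ vQ = qQ) ∨ (n ≤ qQ ∧ qQ < 2*n-1 ∧ vQ = 2*n-2-qQ) ∨ (2*n-1 ≤ qQ ∧ vQ = qQ - (2*n-2)))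
    (c2 : (q2 < n ∧ v2 = q2) ∨ (n ≤ q2 ∧ q2 < 2*n-1 ∧ v2 = 2*n-2-q2) ∨ (2*n-1 ≤ q2 ∧ v2 = q2 - (2*n-2)))
    (o1 : q1 < qQ) (o2 : qQ < qP) (o3 : qP < q2)
    (e12 : v1 = v2) (hE : vP < v1) (hF : v1 < vQ) : q1 + 1 ≤ n ∧ 2*n-2 ≤ q2 := by
  rcases c1 with ⟨a1,a2⟩|⟨a1,a1',a2⟩|⟨a1,a2⟩ <;> rcases cP with ⟨d1,d2⟩|⟨d1,d1',d2⟩|⟨d1,d2⟩ <;>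
    rcases cQ with ⟨f1,f2⟩|⟨f1,f1',f2⟩|⟨f1,f2⟩ <;> rcases c2 with ⟨g1,g2⟩|⟨g1,g1',g2⟩|⟨g1,g2⟩ <;> omega

/-- The central contradiction. -/
theorem core {n : ℕ} (hn : 2 < n) (xs : Fin n → Var) (hxs : Function.Injective xs)
    (u : Word) (Θ : Var → Word) (hΘne : ∀ c, Θ c ≠ [])
    (hcard : u.toFinset.card < n - 1)
    (hΘ : ∀ a b : Var, a ∈ u → b ∈ u → ∀ c : Var, (∃ m, 0 < m ∧ Θ a = List.replicate m c) →
       (∃ m, 0 < m ∧ Θ b = List.replicate m c) → a = b)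
    (hT : (u.flatMap Θ).destutter (· ≠ ·) = Tlist n xs)
    (k0 k1 k2 k3 k4 k5 : ℕ)
    (hk01 : k0 < k1) (hk12 : k1 < k2) (hk23 : k2 < k3) (hk34 : k3 < k4) (hk45 : k4 < k5)
    (hk5 : k5 < u.length)
    (xx P Q : Var) (hPx : P ≠ xx) (hQx : Q ≠ xx)
    (hu1 : u.getD k1 0 = xx) (hu4 : u.getD k4 0 = xx)
    (kP kQ : ℕ) (hPQcase : (kP = k2 ∧ kQ = k3) ∨ (kP = k3 ∧ kQ = k2))
    (hu0 : u.getD k0 0 = P) (huP : u.getD kP 0 = P)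
    (huQ : u.getD kQ 0 = Q) (hu5 : u.getD k5 0 = Q)
    (hNL : ∀ k, k1 < k → k < k4 → 2 ≤ u.count (u.getD k 0))
    (l1 l2 : Var) (hl1 : l1 ∈ u) (hl2 : l2 ∈ u) (hl12 : l1 ≠ l2)
    (hlin1 : u.count l1 = 1) (hlin2 : u.count l2 = 1) : False := by
  have hnpos : 0 < n := by omega
  set W := u.flatMap Θ with hWdef
  obtain ⟨isl, hisl0, hislstep, hislget, hisllast⟩ := exists_isl W
  have hTlen : (Tlist n xs).length = 3 * n - 2 := Tlist_length hn xs
  -- basic range facts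
  have hkP2 : kP < u.length := by rcases hPQcase with ⟨h, _⟩ | ⟨h, _⟩ <;> omega
  have hkQ2 : kQ < u.length := by rcases hPQcase with ⟨_, h⟩ | ⟨_, h⟩ <;> omega
  have hk0' : k0 < u.length := by omega
  have hk1' : k1 < u.length := by omega
  have hk4' : k4 < u.length := by omega
  have hlenpos : ∀ c : Var, 0 < (Θ c).length := fun c => List.length_pos_iff.mpr (hΘne c)
  have hbound : ∀ pp, pp < W.length → isl pp < 3 * n - 2 := by
    intro pp hpp
    have := (hislget pp hpp).1
    rwa [hT, hTlen] at this
  set XL : ℕ → Var := fun v => xs ⟨v % n, Nat.mod_lt v hnpos⟩ with hXLdef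
  have hXLinj : ∀ a b, a < n → b < n → XL a = XL b → a = b := by
    intro a b ha hb h
    have := hxs h
    have h2 : a % n = b % n := congrArg Fin.val this
    rwa [Nat.mod_eq_of_lt ha, Nat.mod_eq_of_lt hb] at h2
  have hlet : ∀ pp, pp < W.length → W.getD pp 0 = XL (valn n (isl pp)) := by
    intro pp hpp
    have h1 := (hislget pp hpp).2
    rw [hT, Tlist_getD hn xs (hbound pp hpp)] at h1
    rw [← h1]
    exact (xs_congr xs _ _ (Nat.mod_eq_of_lt (valn_lt hn (hbound pp hpp))).symm)
  have hvlt : ∀ pp, pp < W.length → valn n (isl pp) < n := fun pp hpp => valn_lt hn (hbound pp hpp)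
  have hveq : ∀ pp qq, pp < W.length → qq < W.length →
      (W.getD pp 0 = W.getD qq 0 ↔ valn n (isl pp) = valn n (isl qq)) := by
    intro pp qq hpp hqq
    rw [hlet pp hpp, hlet qq hqq]
    constructor
    · intro h; exact hXLinj _ _ (hvlt pp hpp) (hvlt qq hqq) h
    · intro h; rw [h]
  -- monotonicity and steps
  have hstep1 : ∀ t, t + 1 < W.length → isl t ≤ isl (t + 1) ∧ isl (t + 1) ≤ isl t + 1 := by
    intro t ht
    by_cases h : W.getD t 0 = W.getD (t + 1) 0
    · have := (hislstep t ht).1 h; omega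
    · have := (hislstep t ht).2 h; omega
  have hmono : ∀ pp qq, pp ≤ qq → qq < W.length → isl pp ≤ isl qq := by
    intro pp qq h hq
    have := mono_of_step isl (qq - pp) pp (fun t ht ht' => (hstep1 t (by omega)).1)
    have e : pp + (qq - pp) = qq := by omega
    rwa [e] at this
  have hstrict : ∀ pp qq, pp < qq → qq < W.length → W.getD pp 0 ≠ W.getD qq 0 → isl pp < isl qq := by
    intro pp qq h hq hne
    have h1 := hmono pp qq (by omega) hq
    rcases Nat.lt_or_ge (isl pp) (isl qq) with h2 | h2
    · exact h2
    · exfalso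
      apply hne
      rw [hveq pp qq (by omega) hq]
      have he : isl pp = isl qq := by omega
      rw [he]
  -- span abbreviations
  have horder : ∀ k k', k < k' → k' < u.length →
      Spos Θ u k + (Θ (u.getD k 0)).length ≤ Spos Θ u k' := by
    intro k k' h h2
    rw [← Spos_succ Θ u k (by omega)]
    exact Spos_mono Θ u (by omega)
  have hspan_lt : ∀ k, k < u.length → ∀ r, r < (Θ (u.getD k 0)).length →
      Spos Θ u k + r < W.length := fun k hk r hr => span_bound Θ u k hk r hr
  -- the alternation fact
  have habab : ∀ p1 p2 p3 p4 : ℕ, p1 < p2 → p2 < p3 → p3 < p4 → p4 < W.length →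
      W.getD p1 0 = W.getD p3 0 → W.getD p2 0 = W.getD p4 0 → W.getD p1 0 ≠ W.getD p2 0 →
      valn n (isl p1) < valn n (isl p2) := by
    intro p1 p2 p3 p4 h12 h23 h34 h4 he13 he24 hne
    have q12 : isl p1 < isl p2 := hstrict p1 p2 h12 (by omega) hne
    have q23 : isl p2 < isl p3 := hstrict p2 p3 h23 (by omega) (by rw [← he13]; exact fun h => hne h.symm)
    have q34 : isl p3 < isl p4 := hstrict p3 p4 h34 h4 (by rw [← he13, ← he24]; exact hne)
    have v13 : valn n (isl p1) = valn n (isl p3) := (hveq p1 p3 (by omega) (by omega)).mp he13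
    have v24 : valn n (isl p2) = valn n (isl p4) := (hveq p2 p4 (by omega) h4).mp he24
    have b1 := hbound p1 (by omega)
    have b2 := hbound p2 (by omega)
    have b3 := hbound p3 (by omega)
    have b4 := hbound p4 h4
    rcases valn_spec hn b1 with ⟨a1, a2⟩ | ⟨a1, a1', a2⟩ | ⟨a1, a2⟩ <;>
      rcases valn_spec hn b2 with ⟨c1, c2⟩ | ⟨c1, c1', c2⟩ | ⟨c1, c2⟩ <;>
        rcases valn_spec hn b3 with ⟨d1, d2⟩ | ⟨d1, d1', d2⟩ | ⟨d1, d2⟩ <;>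
          rcases valn_spec hn b4 with ⟨e1, e2⟩ | ⟨e1, e1', e2⟩ | ⟨e1, e2⟩ <;> omega
  -- the paired-adjacency fact
  have hpair : ∀ k k', k < k' → k' < u.length → u.getD k 0 = u.getD k' 0 →
      ∀ r, r + 1 < (Θ (u.getD k 0)).length →
      (Θ (u.getD k 0)).getD r 0 ≠ (Θ (u.getD k 0)).getD (r + 1) 0 →
      isl (Spos Θ u k + r) + 1 < n ∧ 2 * n - 2 ≤ isl (Spos Θ u k' + r) := by
    intro k k' hkk' hk' hsame r hr hne
    have hk : k < u.length := by omega
    have hlen' : (Θ (u.getD k' 0)).length = (Θ (u.getD k 0)).length := by rw [hsame]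
    have hp1 : Spos Θ u k + r < W.length := hspan_lt k hk r (by omega)
    have hp2 : Spos Θ u k + (r + 1) < W.length := hspan_lt k hk (r + 1) (by omega)
    have hp3 : Spos Θ u k' + r < W.length := hspan_lt k' hk' r (by omega)
    have hp4 : Spos Θ u k' + (r + 1) < W.length := hspan_lt k' hk' (r + 1) (by omega)
    have g1 : W.getD (Spos Θ u k + r) 0 = (Θ (u.getD k 0)).getD r 0 :=
      W_getD_span Θ u k hk r (by omega)
    have g2 : W.getD (Spos Θ u k + (r + 1)) 0 = (Θ (u.getD k 0)).getD (r + 1) 0 :=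
      W_getD_span Θ u k hk (r + 1) (by omega)
    have g3 : W.getD (Spos Θ u k' + r) 0 = (Θ (u.getD k 0)).getD r 0 := by
      rw [W_getD_span Θ u k' hk' r (by omega), hsame]
    have g4 : W.getD (Spos Θ u k' + (r + 1)) 0 = (Θ (u.getD k 0)).getD (r + 1) 0 := by
      rw [W_getD_span Θ u k' hk' (r + 1) (by omega), hsame]
    have e1 : Spos Θ u k + r + 1 = Spos Θ u k + (r + 1) := by omega
    have e2 : Spos Θ u k' + r + 1 = Spos Θ u k' + (r + 1) := by omega
    have s1 : isl (Spos Θ u k + (r + 1)) = isl (Spos Θ u k + r) + 1 := by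
      rw [← e1]
      exact (hislstep _ (by omega)).2 (by rw [e1, g1, g2]; exact hne)
    have s2 : isl (Spos Θ u k' + (r + 1)) = isl (Spos Θ u k' + r) + 1 := by
      rw [← e2]
      exact (hislstep _ (by omega)).2 (by rw [e2, g3, g4]; exact hne)
    have hord : Spos Θ u k + (r + 1) ≤ Spos Θ u k' + r := by
      have := horder k k' hkk' hk'
      omega
    have hm : isl (Spos Θ u k + (r + 1)) ≤ isl (Spos Θ u k' + r) := hmono _ _ hord hp3
    have v1 : valn n (isl (Spos Θ u k + r)) = valn n (isl (Spos Θ u k' + r)) :=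
      (hveq _ _ hp1 hp3).mp (by rw [g1, g3])
    have v2 : valn n (isl (Spos Θ u k + (r + 1))) = valn n (isl (Spos Θ u k' + (r + 1))) :=
      (hveq _ _ hp2 hp4).mp (by rw [g2, g4])
    have vne : valn n (isl (Spos Θ u k + r)) ≠ valn n (isl (Spos Θ u k + (r + 1))) := by
      intro h
      exact hne (by rw [← g1, ← g2]; exact (hveq _ _ hp1 hp2).mpr h)
    have b1 := hbound _ hp1
    have b2 := hbound _ hp2
    have b3 := hbound _ hp3
    have b4 := hbound _ hp4
    rcases valn_spec hn b1 with ⟨a1, a2⟩ | ⟨a1, a1', a2⟩ | ⟨a1, a2⟩ <;>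
      rcases valn_spec hn b2 with ⟨c1, c2⟩ | ⟨c1, c1', c2⟩ | ⟨c1, c2⟩ <;>
        rcases valn_spec hn b3 with ⟨d1, d2⟩ | ⟨d1, d1', d2⟩ | ⟨d1, d2⟩ <;>
          rcases valn_spec hn b4 with ⟨f1, f2⟩ | ⟨f1, f1', f2⟩ | ⟨f1, f2⟩ <;> omega
  -- find an exact adjacency at a prescribed level inside a span
  have hswitch : ∀ k, k < u.length → ∀ p1 p2, Spos Θ u k ≤ p1 → p1 ≤ p2 →
      p2 < Spos Θ u k + (Θ (u.getD k 0)).length → ∀ C, isl p1 ≤ C → C + 1 ≤ isl p2 →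
      ∃ r, r + 1 < (Θ (u.getD k 0)).length ∧
        (Θ (u.getD k 0)).getD r 0 ≠ (Θ (u.getD k 0)).getD (r + 1) 0 ∧
        isl (Spos Θ u k + r) = C := by
    intro k hk p1 p2 hle1 hle12 hlt2 C hC1 hC2
    have hp2W : p2 < W.length := by
      have := hspan_lt k hk ((Θ (u.getD k 0)).length - 1) (by have := hlenpos (u.getD k 0); omega)
      omega
    -- find pa with isl pa = C in [p1,p2]
    obtain ⟨pa, hpa1, hpa2, hpa3⟩ := ivt_of_step isl (p2 - p1) p1 C
      (fun t ht ht' => (hstep1 t (by omega)).2) hC1 (by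
        have e : p1 + (p2 - p1) = p2 := by omega
        rw [e]; omega)
    have e : p1 + (p2 - p1) = p2 := by omega
    rw [e] at hpa2
    -- find pb with isl pb = C+1 in [pa,p2]
    obtain ⟨pb, hpb1, hpb2, hpb3⟩ := ivt_of_step isl (p2 - pa) pa (C + 1)
      (fun t ht ht' => (hstep1 t (by omega)).2) (by omega) (by
        have e2 : pa + (p2 - pa) = p2 := by omega
        rw [e2]; omega)
    have e2 : pa + (p2 - pa) = p2 := by omega
    rw [e2] at hpb2
    -- switch
    obtain ⟨t, ht1, ht2, ht3, ht4⟩ := switch_of_step isl (pb - pa) pa C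
      (fun t ht ht' => hstep1 t (by omega)) hpa3 (by
        have e3 : pa + (pb - pa) = pb := by omega
        rw [e3]; exact hpb3)
    have ht2' : t < pb := by omega
    set r := t - Spos Θ u k with hrdef
    have htr : t = Spos Θ u k + r := by omega
    have hrlen : r + 1 < (Θ (u.getD k 0)).length := by omega
    refine ⟨r, hrlen, ?_, by rw [← htr]; exact ht3⟩
    intro hc
    have g1 : W.getD t 0 = (Θ (u.getD k 0)).getD r 0 := by
      rw [htr]; exact W_getD_span Θ u k hk r (by omega)
    have g2 : W.getD (t + 1) 0 = (Θ (u.getD k 0)).getD (r + 1) 0 := by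
      have e4 : t + 1 = Spos Θ u k + (r + 1) := by omega
      rw [e4]; exact W_getD_span Θ u k hk (r + 1) (by omega)
    have := (hislstep t (by omega)).1 (by rw [g1, g2, hc])
    omega
  -- occupant constancy: a repeated letter owning an inner-descent island has a one-island span
  have hocc1 : ∀ k, k < u.length → 2 ≤ u.count (u.getD k 0) → ∀ pp, Spos Θ u k ≤ pp →
      pp < Spos Θ u k + (Θ (u.getD k 0)).length → n ≤ isl pp → isl pp ≤ 2 * n - 3 →
      ∀ pp', Spos Θ u k ≤ pp' → pp' < Spos Θ u k + (Θ (u.getD k 0)).length → isl pp' = isl pp := by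
    intro k hk hcnt pp hpp1 hpp2 hq1 hq2
    have hlenk := hlenpos (u.getD k 0)
    have hlast_in : Spos Θ u k + (Θ (u.getD k 0)).length - 1 < W.length := by
      have := hspan_lt k hk ((Θ (u.getD k 0)).length - 1) (by omega)
      omega
    have hWin : ∀ x, Spos Θ u k ≤ x → x < Spos Θ u k + (Θ (u.getD k 0)).length → x < W.length := by
      intro x h1 h2
      have := hspan_lt k hk (x - Spos Θ u k) (by omega)
      omega
    -- second occurrence
    obtain ⟨j1, j2, hj12, hj2, hje1, hje2⟩ := two_indices hcnt
    have hsec : ∃ kk, kk < u.length ∧ kk ≠ k ∧ u.getD kk 0 = u.getD k 0 := by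
      by_cases h : j1 = k
      · exact ⟨j2, hj2, by omega, hje2⟩
      · exact ⟨j1, by omega, h, hje1⟩
    obtain ⟨kk, hkk1, hkk2, hkk3⟩ := hsec
    have hbad : ∀ r, r + 1 < (Θ (u.getD k 0)).length →
        (Θ (u.getD k 0)).getD r 0 ≠ (Θ (u.getD k 0)).getD (r + 1) 0 →
        isl (Spos Θ u k + r) + 1 < n ∨ 2 * n - 2 ≤ isl (Spos Θ u k + r) := by
      intro r hr hne
      rcases Nat.lt_or_ge k kk with hc | hc
      · exact Or.inl (hpair k kk hc hkk1 hkk3.symm r hr hne).1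
      · have hc2 : kk < k := by omega
        have := hpair kk k hc2 hk hkk3 r (by rw [hkk3]; exact hr) (by rw [hkk3]; exact hne)
        exact Or.inr this.2
    -- show span is single-island
    have hsingle : isl (Spos Θ u k) = isl (Spos Θ u k + (Θ (u.getD k 0)).length - 1) := by
      by_contra hne
      have hle : isl (Spos Θ u k) ≤ isl (Spos Θ u k + (Θ (u.getD k 0)).length - 1) :=
        hmono _ _ (by omega) hlast_in
      have hlt : isl (Spos Θ u k) < isl (Spos Θ u k + (Θ (u.getD k 0)).length - 1) := by omega
      rcases Nat.lt_or_ge (isl pp) (isl (Spos Θ u k + (Θ (u.getD k 0)).length - 1)) with hcc | hcc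
      · obtain ⟨r, hr1, hr2, hr3⟩ := hswitch k hk pp (Spos Θ u k + (Θ (u.getD k 0)).length - 1)
          hpp1 (by omega) (by omega) (isl pp) (le_refl _) (by omega)
        rcases hbad r hr1 hr2 with h | h <;> omega
      · have hup : isl pp ≤ isl (Spos Θ u k + (Θ (u.getD k 0)).length - 1) :=
          hmono _ _ (by omega) hlast_in
        have heq : isl pp = isl (Spos Θ u k + (Θ (u.getD k 0)).length - 1) := by omega
        have hlo : isl (Spos Θ u k) < isl pp := by omega
        obtain ⟨r, hr1, hr2, hr3⟩ := hswitch k hk (Spos Θ u k) pp (le_refl _) (by omega)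
          (by omega) (isl pp - 1) (by omega) (by omega)
        rcases hbad r hr1 hr2 with h | h <;> omega
    intro pp' h1 h2
    have a1 : isl (Spos Θ u k) ≤ isl pp' := hmono _ _ h1 (hWin pp' h1 h2)
    have a2 : isl pp' ≤ isl (Spos Θ u k + (Θ (u.getD k 0)).length - 1) :=
      hmono _ _ (by omega) hlast_in
    have a3 : isl (Spos Θ u k) ≤ isl pp := hmono _ _ hpp1 (hWin pp hpp1 hpp2)
    have a4 : isl pp ≤ isl (Spos Θ u k + (Θ (u.getD k 0)).length - 1) :=
      hmono _ _ (by omega) hlast_in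
    omega
  -- main bounds on the two xx-spans
  have e41 : u.getD k4 0 = u.getD k1 0 := by rw [hu1, hu4]
  have hX : (∀ pp, Spos Θ u k1 ≤ pp → pp < Spos Θ u k1 + (Θ (u.getD k1 0)).length →
        isl pp + 1 ≤ n) ∧
      (∀ pp, Spos Θ u k4 ≤ pp → pp < Spos Θ u k4 + (Θ (u.getD k4 0)).length →
        2 * n - 2 ≤ isl pp) := by
    have hlen1 := hlenpos (u.getD k1 0)
    have hlen4 := hlenpos (u.getD k4 0)
    have hWin1 : ∀ x, Spos Θ u k1 ≤ x → x < Spos Θ u k1 + (Θ (u.getD k1 0)).length →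
        x < W.length := by
      intro x h1 h2
      have := hspan_lt k1 hk1' (x - Spos Θ u k1) (by omega)
      omega
    have hWin4 : ∀ x, Spos Θ u k4 ≤ x → x < Spos Θ u k4 + (Θ (u.getD k4 0)).length →
        x < W.length := by
      intro x h1 h2
      have := hspan_lt k4 hk4' (x - Spos Θ u k4) (by omega)
      omega
    by_cases hconstx : ∀ r, r + 1 < (Θ (u.getD k1 0)).length →
        (Θ (u.getD k1 0)).getD r 0 = (Θ (u.getD k1 0)).getD (r + 1) 0
    · -- Θ xx is a power
      have hCx : ∀ r, r < (Θ (u.getD k1 0)).length →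
          (Θ (u.getD k1 0)).getD r 0 = (Θ (u.getD k1 0)).getD 0 0 := const_of_adj _ hconstx
      have hconstspan : ∀ kc, kc < u.length → u.getD kc 0 = u.getD k1 0 →
          ∀ pp, Spos Θ u kc ≤ pp → pp < Spos Θ u kc + (Θ (u.getD k1 0)).length →
          isl pp = isl (Spos Θ u kc) := by
        intro kc hkc he pp h1 h2
        have hst : ∀ t, Spos Θ u kc ≤ t → t < Spos Θ u kc + (pp - Spos Θ u kc) →
            isl (t + 1) = isl t := by
          intro t ht1 ht2
          have hr1 : t - Spos Θ u kc + 1 < (Θ (u.getD k1 0)).length := by omega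
          have g1 : W.getD t 0 = (Θ (u.getD k1 0)).getD (t - Spos Θ u kc) 0 := by
            have := W_getD_span Θ u kc hkc (t - Spos Θ u kc) (by rw [he]; omega)
            rw [he] at this
            have e : Spos Θ u kc + (t - Spos Θ u kc) = t := by omega
            rwa [e] at this
          have g2 : W.getD (t + 1) 0 = (Θ (u.getD k1 0)).getD (t - Spos Θ u kc + 1) 0 := by
            have := W_getD_span Θ u kc hkc (t - Spos Θ u kc + 1) (by rw [he]; omega)
            rw [he] at this
            have e : Spos Θ u kc + (t - Spos Θ u kc + 1) = t + 1 := by omega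
            rwa [e] at this
          have hWt : t + 1 < W.length := by
            have := hspan_lt kc hkc (t - Spos Θ u kc + 1) (by rw [he]; omega)
            omega
          apply (hislstep t hWt).1
          rw [g1, g2]
          exact (hCx _ (by omega)).trans (hCx _ (by omega)).symm
        have := const_of_step isl (pp - Spos Θ u kc) (Spos Θ u kc) hst
        have e : Spos Θ u kc + (pp - Spos Θ u kc) = pp := by omega
        rwa [e] at this
      -- letters differing from the power letter inside Θ P and Θ Q
      have hmemP : P ∈ u := by rw [← hu0]; exact getD_mem hk0'
      have hmemQ : Q ∈ u := by rw [← hu5]; exact getD_mem hk5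
      have hmemx : xx ∈ u := by rw [← hu1]; exact getD_mem hk1'
      have hrepl : ∀ (w : Word) (c : Var), (∀ r, r < w.length → w.getD r 0 = c) →
          w = List.replicate w.length c := by
        intro w c h
        apply List.eq_replicate_of_mem
        intro b hb
        obtain ⟨r, hr, he⟩ := List.getElem_of_mem hb
        rw [← he, ← List.getD_eq_getElem w 0 hr]
        exact h r hr
      set c0 := (Θ (u.getD k1 0)).getD 0 0 with hc0def
      have hxpow : ∃ m, 0 < m ∧ Θ xx = List.replicate m c0 := by
        refine ⟨(Θ xx).length, by rw [hu1] at hlen1; exact hlen1, ?_⟩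
        have := hrepl (Θ (u.getD k1 0)) c0 hCx
        rw [hu1] at this
        exact this
      have hPe : ∃ rP, rP < (Θ P).length ∧ (Θ P).getD rP 0 ≠ c0 := by
        by_contra hno
        push_neg at hno
        exact hPx (hΘ P xx hmemP hmemx c0
          ⟨(Θ P).length, hlenpos P, hrepl (Θ P) c0 hno⟩ hxpow)
      have hQe : ∃ rQ, rQ < (Θ Q).length ∧ (Θ Q).getD rQ 0 ≠ c0 := by
        by_contra hno
        push_neg at hno
        exact hQx (hΘ Q xx hmemQ hmemx c0
          ⟨(Θ Q).length, hlenpos Q, hrepl (Θ Q) c0 hno⟩ hxpow)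
      obtain ⟨rP, hrP, hrPne⟩ := hPe
      obtain ⟨rQ, hrQ, hrQne⟩ := hQe
      have hk1P : k1 < kP := by rcases hPQcase with ⟨h, _⟩ | ⟨h, _⟩ <;> omega
      have hkP4 : kP < k4 := by rcases hPQcase with ⟨h, _⟩ | ⟨h, _⟩ <;> omega
      have hk1Q : k1 < kQ := by rcases hPQcase with ⟨_, h⟩ | ⟨_, h⟩ <;> omega
      have hkQ4 : kQ < k4 := by rcases hPQcase with ⟨_, h⟩ | ⟨_, h⟩ <;> omega
      -- letters at the six positions
      have gP0 : W.getD (Spos Θ u k0 + rP) 0 = (Θ P).getD rP 0 := by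
        have := W_getD_span Θ u k0 hk0' rP (by rw [hu0]; exact hrP)
        rwa [hu0] at this
      have gPP : W.getD (Spos Θ u kP + rP) 0 = (Θ P).getD rP 0 := by
        have := W_getD_span Θ u kP hkP2 rP (by rw [huP]; exact hrP)
        rwa [huP] at this
      have gQQ : W.getD (Spos Θ u kQ + rQ) 0 = (Θ Q).getD rQ 0 := by
        have := W_getD_span Θ u kQ hkQ2 rQ (by rw [huQ]; exact hrQ)
        rwa [huQ] at this
      have gQ5 : W.getD (Spos Θ u k5 + rQ) 0 = (Θ Q).getD rQ 0 := by
        have := W_getD_span Θ u k5 hk5 rQ (by rw [hu5]; exact hrQ)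
        rwa [hu5] at this
      have gc1 : W.getD (Spos Θ u k1) 0 = c0 := by
        have h := W_getD_span Θ u k1 hk1' 0 (by omega)
        rwa [Nat.add_zero] at h
      have gc4 : W.getD (Spos Θ u k4) 0 = c0 := by
        have h := W_getD_span Θ u k4 hk4' 0 (by rw [e41]; omega)
        rw [e41] at h
        rwa [Nat.add_zero] at h
      -- position order facts
      have hlP0 : rP < (Θ (u.getD k0 0)).length := by rw [hu0]; exact hrP
      have hlPP : rP < (Θ (u.getD kP 0)).length := by rw [huP]; exact hrP
      have hlQQ : rQ < (Θ (u.getD kQ 0)).length := by rw [huQ]; exact hrQ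
      have hlQ5 : rQ < (Θ (u.getD k5 0)).length := by rw [hu5]; exact hrQ
      have w0 : Spos Θ u k0 + rP < W.length := hspan_lt k0 hk0' rP hlP0
      have wP : Spos Θ u kP + rP < W.length := hspan_lt kP hkP2 rP hlPP
      have wQ : Spos Θ u kQ + rQ < W.length := hspan_lt kQ hkQ2 rQ hlQQ
      have w5 : Spos Θ u k5 + rQ < W.length := hspan_lt k5 hk5 rQ hlQ5
      have w1 : Spos Θ u k1 < W.length := by
        have := hspan_lt k1 hk1' 0 (by omega); omega
      have w4 : Spos Θ u k4 < W.length := by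
        have := hspan_lt k4 hk4' 0 (by rw [e41]; omega); omega
      have o01 : Spos Θ u k0 + rP < Spos Θ u k1 := by
        have := horder k0 k1 hk01 hk1'
        omega
      have o1P : Spos Θ u k1 < Spos Θ u kP + rP := by
        have := horder k1 kP hk1P hkP2
        omega
      have oP4 : Spos Θ u kP + rP < Spos Θ u k4 := by
        have := horder kP k4 hkP4 hk4'
        omega
      have o1Q : Spos Θ u k1 < Spos Θ u kQ + rQ := by
        have := horder k1 kQ hk1Q hkQ2
        omega
      have oQ4 : Spos Θ u kQ + rQ < Spos Θ u k4 := by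
        have := horder kQ k4 hkQ4 hk4'
        omega
      have o45 : Spos Θ u k4 < Spos Θ u k5 + rQ := by
        have := horder k4 k5 hk45 hk5
        omega
      -- alternation values
      have hE : valn n (isl (Spos Θ u k0 + rP)) < valn n (isl (Spos Θ u k1)) := by
        apply habab _ _ _ _ o01 o1P oP4 w4
        · rw [gP0, gPP]
        · rw [gc1, gc4]
        · rw [gP0, gc1]; exact hrPne
      have hF : valn n (isl (Spos Θ u k1)) < valn n (isl (Spos Θ u kQ + rQ)) := by
        apply habab _ _ _ _ o1Q oQ4 o45 w5
        · rw [gc1, gc4]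
        · rw [gQQ, gQ5]
        · rw [gc1, gQQ]
          intro h
          exact hrQne h.symm
      have hEP : valn n (isl (Spos Θ u kP + rP)) = valn n (isl (Spos Θ u k0 + rP)) :=
        (hveq _ _ wP w0).mp (by rw [gP0, gPP])
      have hq12 : valn n (isl (Spos Θ u k1)) = valn n (isl (Spos Θ u k4)) :=
        (hveq _ _ w1 w4).mp (by rw [gc1, gc4])
      -- island orders
      have i1P : isl (Spos Θ u k1) < isl (Spos Θ u kP + rP) :=
        hstrict _ _ o1P wP (by rw [gc1, gPP]; intro h; exact hrPne h.symm)
      have i1Q : isl (Spos Θ u k1) < isl (Spos Θ u kQ + rQ) :=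
        hstrict _ _ o1Q wQ (by rw [gc1, gQQ]; intro h; exact hrQne h.symm)
      have iP4 : isl (Spos Θ u kP + rP) < isl (Spos Θ u k4) :=
        hstrict _ _ oP4 w4 (by rw [gc4, gPP]; intro h; exact hrPne h)
      have iQ4 : isl (Spos Θ u kQ + rQ) < isl (Spos Θ u k4) :=
        hstrict _ _ oQ4 w4 (by rw [gc4, gQQ]; intro h; exact hrQne h)
      -- bounds for valn_spec
      have bb1 := hbound _ w1
      have bb4 := hbound _ w4
      have bbP := hbound _ wP
      have bbQ := hbound _ wQ
      rcases hPQcase with ⟨hPc, hQc⟩ | ⟨hPc, hQc⟩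
      · -- kP = k2 < kQ = k3 : impossible configuration
        exfalso
        have oPQ : Spos Θ u kP + rP < Spos Θ u kQ + rQ := by
          have := horder kP kQ (by omega) hkQ2
          omega
        have iPQ : isl (Spos Θ u kP + rP) < isl (Spos Θ u kQ + rQ) := by
          have hle := hmono _ _ (by omega : Spos Θ u kP + rP ≤ Spos Θ u kQ + rQ) wQ
          rcases Nat.lt_or_ge (isl (Spos Θ u kP + rP)) (isl (Spos Θ u kQ + rQ)) with h | h
          · exact h
          · exfalso
            have : isl (Spos Θ u kP + rP) = isl (Spos Θ u kQ + rQ) := by omega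
            rw [this] at hEP
            omega
        exact arith_powa n _ _ _ _ _ _ _ _ hn (valn_spec hn bb1) (valn_spec hn bbP)
          (valn_spec hn bbQ) (valn_spec hn bb4) i1P iPQ iQ4 hq12 (by omega) hF
      · -- kQ = k2 < kP = k3 : bounds follow
        have oQP : Spos Θ u kQ + rQ < Spos Θ u kP + rP := by
          have := horder kQ kP (by omega) hkP2
          omega
        have iQP : isl (Spos Θ u kQ + rQ) < isl (Spos Θ u kP + rP) := by
          have hle := hmono _ _ (by omega : Spos Θ u kQ + rQ ≤ Spos Θ u kP + rP) wP
          rcases Nat.lt_or_ge (isl (Spos Θ u kQ + rQ)) (isl (Spos Θ u kP + rP)) with h | h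
          · exact h
          · exfalso
            have : isl (Spos Θ u kQ + rQ) = isl (Spos Θ u kP + rP) := by omega
            rw [← this] at hEP
            omega
        have hbounds : isl (Spos Θ u k1) + 1 ≤ n ∧ 2 * n - 2 ≤ isl (Spos Θ u k4) := by
          have := arith_powb n _ _ _ _ _ _ _ _ hn (valn_spec hn bb1) (valn_spec hn bbP)
            (valn_spec hn bbQ) (valn_spec hn bb4) i1Q iQP iP4 hq12 (by omega) hF
          omega
        constructor
        · intro pp h1 h2
          rw [hconstspan k1 hk1' rfl pp h1 h2]
          exact hbounds.1
        · intro pp h1 h2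
          rw [hconstspan k4 hk4' e41 pp h1 (by rw [← e41]; exact h2)]
          exact hbounds.2
    · -- Θ xx is not a power
      push_neg at hconstx
      obtain ⟨r0, hr0, hr0ne⟩ := hconstx
      have hp0 := hpair k1 k4 (by omega) hk4' e41.symm r0 hr0 hr0ne
      constructor
      · intro pp h1 h2
        by_contra hcon
        push_neg at hcon
        have hq : n ≤ isl pp := by omega
        have hstart : isl (Spos Θ u k1) ≤ isl (Spos Θ u k1 + r0) :=
          hmono _ _ (by omega) (hspan_lt k1 hk1' r0 (by omega))
        obtain ⟨r, hra, hrb, hrc⟩ := hswitch k1 hk1' (Spos Θ u k1) pp (le_refl _) h1 h2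
          (n - 1) (by omega) (by omega)
        have := (hpair k1 k4 (by omega) hk4' e41.symm r hra hrb).1
        omega
      · intro pp h1 h2
        by_contra hcon
        push_neg at hcon
        have hq : isl pp ≤ 2 * n - 3 := by
          have := hbound pp (hWin4 pp h1 h2)
          omega
        have hlast4 : Spos Θ u k4 + (Θ (u.getD k4 0)).length - 1 < W.length := by
          have := hspan_lt k4 hk4' ((Θ (u.getD k4 0)).length - 1) (by omega)
          omega
        have hend : 2 * n - 2 ≤ isl (Spos Θ u k4 + (Θ (u.getD k4 0)).length - 1) := by
          have hm : isl (Spos Θ u k4 + r0) ≤ isl (Spos Θ u k4 + (Θ (u.getD k4 0)).length - 1) := by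
            apply hmono _ _ _ hlast4
            rw [e41]
            omega
          omega
        obtain ⟨r, hra, hrb, hrc⟩ := hswitch k4 hk4' pp (Spos Θ u k4 + (Θ (u.getD k4 0)).length - 1)
          h1 (by omega) (by omega) (2 * n - 3) (by omega) (by omega)
        have hra' : r + 1 < (Θ (u.getD k1 0)).length := by rw [← e41]; exact hra
        have hrb' : (Θ (u.getD k1 0)).getD r 0 ≠ (Θ (u.getD k1 0)).getD (r + 1) 0 := by
          rw [← e41]; exact hrb
        have := (hpair k1 k4 (by omega) hk4' e41.symm r hra' hrb').2
        omega
  -- surjectivity of islands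
  have hWpos : 0 < W.length := by
    have := hspan_lt k1 hk1' 0 (by have := hlenpos (u.getD k1 0); omega)
    omega
  have hWne : W ≠ [] := by
    intro h
    rw [h] at hWpos
    simp at hWpos
  have hlastisl : isl (W.length - 1) = 3 * n - 3 := by
    have h := hisllast hWne
    rw [hT, hTlen] at h
    omega
  have hsurj : ∀ q, q ≤ 3 * n - 3 → ∃ pp, pp < W.length ∧ isl pp = q := by
    intro q hq
    obtain ⟨pp, h1, h2, h3⟩ := ivt_of_step isl (W.length - 1) 0 q
      (fun t ht ht' => (hstep1 t (by omega)).2) (by rw [hisl0]; omega)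
      (by
        have e : 0 + (W.length - 1) = W.length - 1 := by omega
        rw [e, hlastisl]; omega)
    exact ⟨pp, by omega, h3⟩
  -- the owner of each inner descent island
  have hmain : ∀ q : ℕ, ∃ t : Var, n ≤ q → q ≤ 2 * n - 3 → (t ∈ u ∧ u.count t ≠ 1 ∧
      ∃ m, 0 < m ∧ Θ t = List.replicate m (XL (valn n q))) := by
    intro q
    by_cases hqr : n ≤ q ∧ q ≤ 2 * n - 3
    · obtain ⟨hq1, hq2⟩ := hqr
      obtain ⟨pp, hpp, hppq⟩ := hsurj q (by omega)
      obtain ⟨k, hk, r, hr, he⟩ := pos_decomp Θ u pp hpp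
      have hin1 : Spos Θ u k ≤ pp := by omega
      have hin2 : pp < Spos Θ u k + (Θ (u.getD k 0)).length := by omega
      have hX1end : isl (Spos Θ u k1) + 1 ≤ n :=
        hX.1 (Spos Θ u k1) (le_refl _) (by have := hlenpos (u.getD k1 0); omega)
      have hX4end : 2 * n - 2 ≤ isl (Spos Θ u k4 + (Θ (u.getD k4 0)).length - 1) :=
        hX.2 _ (by have := hlenpos (u.getD k4 0); omega) (by have := hlenpos (u.getD k4 0); omega)
      have hw4 : Spos Θ u k4 + (Θ (u.getD k4 0)).length - 1 < W.length := by
        have := hspan_lt k4 hk4' ((Θ (u.getD k4 0)).length - 1)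
          (by have := hlenpos (u.getD k4 0); omega)
        omega
      have hk14a : k1 < k := by
        by_contra hcon
        push_neg at hcon
        rcases Nat.lt_or_ge k k1 with hlt | hge
        · have hpple : pp + 1 ≤ Spos Θ u k1 := by
            have h1 := horder k k1 hlt hk1'
            omega
          have := hmono pp (Spos Θ u k1) (by omega)
            (by have := hlenpos (u.getD k1 0); have := hspan_lt k1 hk1' 0 (by omega); omega)
          have := hX1end
          omega
        · have hkk : k = k1 := by omega
          subst hkk
          have := hX.1 pp hin1 hin2
          omega
      have hk14b : k < k4 := by
        by_contra hcon
        push_neg at hcon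
        rcases Nat.lt_or_ge k4 k with hlt | hge
        · have hpple : Spos Θ u k4 + (Θ (u.getD k4 0)).length - 1 < pp := by
            have h1 := horder k4 k hlt hk
            have := hlenpos (u.getD k4 0)
            omega
          have := hmono (Spos Θ u k4 + (Θ (u.getD k4 0)).length - 1) pp (by omega) hpp
          omega
        · have hkk : k = k4 := by omega
          subst hkk
          have := hX.2 pp hin1 hin2
          omega
      have hcnt : 2 ≤ u.count (u.getD k 0) := hNL k hk14a hk14b
      have hoccs := hocc1 k hk hcnt pp hin1 hin2 (by omega) (by omega)
      refine ⟨u.getD k 0, fun _ _ => ⟨getD_mem hk, by omega, (Θ (u.getD k 0)).length,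
        hlenpos _, ?_⟩⟩
      apply List.eq_replicate_of_mem
      intro b hb
      obtain ⟨r', hr', he'⟩ := List.getElem_of_mem hb
      have hwin : Spos Θ u k + r' < W.length := hspan_lt k hk r' hr'
      have hio : isl (Spos Θ u k + r') = q := by
        rw [hoccs _ (by omega) (by omega)]
        omega
      have g := W_getD_span Θ u k hk r' hr'
      have hl := hlet _ hwin
      rw [g, hio] at hl
      rw [← he', ← List.getD_eq_getElem _ 0 hr']
      exact hl
    · exact ⟨0, fun h1 h2 => absurd ⟨h1, h2⟩ hqr⟩
  choose gg hgg using hmain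
  have hginj : ∀ q q', n ≤ q → q ≤ 2 * n - 3 → n ≤ q' → q' ≤ 2 * n - 3 → gg q = gg q' →
      q = q' := by
    intro q q' a1 a2 a3 a4 he
    obtain ⟨m1, hm1, hrep1⟩ := (hgg q a1 a2).2.2
    obtain ⟨m2, hm2, hrep2⟩ := (hgg q' a3 a4).2.2
    rw [he, hrep2] at hrep1
    have hmem : XL (valn n q') ∈ List.replicate m1 (XL (valn n q)) := by
      rw [← hrep1]
      exact List.mem_replicate.mpr ⟨by omega, rfl⟩
    have heq := List.eq_of_mem_replicate hmem
    have hv : valn n q' = valn n q :=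
      hXLinj _ _ (valn_lt hn (by omega)) (valn_lt hn (by omega)) heq
    rcases valn_spec hn (show q < 3 * n - 2 by omega) with ⟨b1, b2⟩ | ⟨b1, b1', b2⟩ | ⟨b1, b2⟩ <;>
      rcases valn_spec hn (show q' < 3 * n - 2 by omega) with
        ⟨d1, d2⟩ | ⟨d1, d1', d2⟩ | ⟨d1, d2⟩ <;> omega
  set Sfin := (Finset.Icc n (2 * n - 3)).image gg with hSdef
  have hcardS : Sfin.card = n - 2 := by
    rw [hSdef, Finset.card_image_of_injOn (by
      intro q hq q' hq' he
      rw [Finset.mem_coe, Finset.mem_Icc] at hq hq'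
      exact hginj q q' hq.1 hq.2 hq'.1 hq'.2 he)]
    rw [Nat.card_Icc]
    omega
  have hnotmem : ∀ l : Var, u.count l = 1 → l ∉ Sfin := by
    intro l hl hmem
    rw [hSdef, Finset.mem_image] at hmem
    obtain ⟨q, hq, he⟩ := hmem
    rw [Finset.mem_Icc] at hq
    have := (hgg q hq.1 hq.2).2.1
    rw [he] at this
    exact this hl
  have hsub : insert l1 (insert l2 Sfin) ⊆ u.toFinset := by
    intro t ht
    rw [Finset.mem_insert, Finset.mem_insert] at ht
    rcases ht with h | h | h
    · subst h; exact List.mem_toFinset.mpr hl1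
    · subst h; exact List.mem_toFinset.mpr hl2
    · rw [hSdef, Finset.mem_image] at h
      obtain ⟨q, hq, he⟩ := h
      rw [Finset.mem_Icc] at hq
      have := (hgg q hq.1 hq.2).1
      rw [he] at this
      exact List.mem_toFinset.mpr this
  have hcardins : (insert l1 (insert l2 Sfin)).card = n := by
    rw [Finset.card_insert_of_notMem (by
      rw [Finset.mem_insert]
      push_neg
      exact ⟨hl12, hnotmem l1 hlin1⟩)]
    rw [Finset.card_insert_of_notMem (hnotmem l2 hlin2)]
    rw [hcardS]
    omega
  have hfin := Finset.card_le_card hsub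
  rw [hcardins] at hfin
  omega


end Stmt9

/-- if `u` has fewer than `n − 1` variables, some block `B` of
`u` deletes to `x⁺y⁺z⁺x⁺`, and `Θ(u)` is of the same type as `Uₙ`, where
`Θ` sends distinct variables of `u` to powers of distinct variables, then:
(a) if `y` occurs to the left of `B` then `z` does not occur to the right
of `B`, and (b) symmetrically. -/

theorem stmt9 (n : ℕ) (hn : 2 < n) (u : Word) (hu : u ≠ [])
    (hcard : u.toFinset.card < n - 1)
    (x y z : Var) (hxy : x ≠ y) (hxz : x ≠ z) (hyz : y ≠ z)
    (p B s : Word) (hB : IsBlockAt u p B s)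
    (hpat : sameType (del B [x, y, z]) [x, y, z, x])
    (Θ : Var → Word) (hΘne : ∀ c : Var, Θ c ≠ [])
    (hΘ : ∀ a b : Var, a ∈ con u → b ∈ con u →
      ∀ c : Var, isPowerOf (Θ a) c → isPowerOf (Θ b) c → a = b)
    (xs : Fin n → Var) (hxs : Function.Injective xs)
    (hsub : sameType (subst Θ u) (Uword n xs)) :
    (y ∈ p → z ∉ s) ∧ (z ∈ p → y ∉ s) := by
  obtain ⟨hu_eq, hBnl, hplast, hshead⟩ := hB
  have hpat4 : (del B [x, y, z]).destutter (· ≠ ·) = [x, y, z, x] := by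
    have hc : List.Chain' (· ≠ ·) [x, y, z, x] := by
      simp [List.Chain', List.isChain_cons_cons]
      exact ⟨hxy, hyz, fun h => hxz h.symm⟩
    have h2 := hpat
    unfold sameType at h2
    rw [h2, List.destutter_of_isChain _ _ hc]
  have hsubl : List.Sublist [x, y, z, x] B := by
    have h1 : List.Sublist ((del B [x, y, z]).destutter (· ≠ ·)) (del B [x, y, z]) :=
      List.destutter_sublist _ _
    rw [hpat4] at h1
    exact h1.trans (List.filter_sublist (l := B))
  obtain ⟨j1, j2, j3, j4, hj12, hj23, hj34, hj4, hB1, hB2, hB3, hB4⟩ :=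
    Stmt9.sublist_indices4 hsubl
  have hulen : u.length = p.length + B.length + s.length := by
    rw [hu_eq, List.length_append, List.length_append]
  have hgetB : ∀ j, j < B.length → u.getD (p.length + j) 0 = B.getD j 0 := by
    intro j hj
    rw [hu_eq, List.getD_append _ _ _ _ (by simp only [List.length_append]; omega),
      List.getD_append_right _ _ _ _ (by omega)]
    congr 1
    omega
  have hgetp : ∀ j, j < p.length → u.getD j 0 = p.getD j 0 := by
    intro j hj
    rw [hu_eq, List.getD_append _ _ _ _ (by simp only [List.length_append]; omega),
      List.getD_append _ _ _ _ hj]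
  have hgets : ∀ j, j < s.length → u.getD (p.length + B.length + j) 0 = s.getD j 0 := by
    intro j hj
    rw [hu_eq, List.getD_append_right _ _ _ _ (by simp only [List.length_append]; omega)]
    congr 1
    simp only [List.length_append]
    omega
  have hT : (u.flatMap Θ).destutter (· ≠ ·) = Stmt9.Tlist n xs := by
    have h2 := hsub
    unfold sameType subst at h2
    rw [h2, Stmt9.destutter_Uword hn xs hxs]
  have hΘ' : ∀ a b : Var, a ∈ u → b ∈ u → ∀ c : Var,
      (∃ m, 0 < m ∧ Θ a = List.replicate m c) → (∃ m, 0 < m ∧ Θ b = List.replicate m c) →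
      a = b := by
    intro a b ha hb c h1 h2
    exact hΘ a b ha hb c h1 h2
  have hnlB : ∀ k, p.length ≤ k → k < p.length + B.length → 2 ≤ u.count (u.getD k 0) := by
    intro k h1 h2
    have hj : k - p.length < B.length := by omega
    have he : u.getD k 0 = B.getD (k - p.length) 0 := by
      have h3 := hgetB (k - p.length) hj
      rw [show p.length + (k - p.length) = k by omega] at h3
      exact h3
    have hmemB : u.getD k 0 ∈ B := by rw [he]; exact Stmt9.getD_mem hj
    have hnl : u.getD k 0 ∉ lin u := hBnl _ hmemB
    have hmemu : u.getD k 0 ∈ u := Stmt9.getD_mem (by omega : k < u.length)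
    have hpos : 0 < u.count (u.getD k 0) := List.count_pos_iff.mpr hmemu
    have hne1 : u.count (u.getD k 0) ≠ 1 := hnl
    omega
  have hcount3 : ∀ t : Var, t ∈ p → t ∈ s → 2 ≤ u.count t := by
    intro t h1 h2
    have c1 : 0 < p.count t := List.count_pos_iff.mpr h1
    have c2 : 0 < s.count t := List.count_pos_iff.mpr h2
    rw [hu_eq, List.count_append, List.count_append]
    omega
  constructor
  · intro hyp
    intro hzs
    have hpne : p ≠ [] := List.ne_nil_of_mem hyp
    have hsne : s ≠ [] := List.ne_nil_of_mem hzs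
    obtain ⟨j0, hj0, hj0e⟩ := Stmt9.mem_index hyp
    obtain ⟨j5, hj5, hj5e⟩ := Stmt9.mem_index hzs
    have hl1lin : u.count (p.getLast hpne) = 1 :=
      hplast _ (List.getLast?_eq_getLast hpne)
    have hl2lin : u.count (s.head hsne) = 1 :=
      hshead _ (List.head?_eq_head hsne)
    have hl12 : p.getLast hpne ≠ s.head hsne := by
      intro h
      have := hcount3 (p.getLast hpne) (List.getLast_mem hpne) (h ▸ List.head_mem hsne)
      omega
    refine Stmt9.core hn xs hxs u Θ hΘne hcard hΘ' hT
      j0 (p.length + j1) (p.length + j2) (p.length + j3) (p.length + j4)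
      (p.length + B.length + j5)
      (by omega) (by omega) (by omega) (by omega) (by omega) (by omega)
      x y z hxy.symm (fun h => hxz h.symm)
      (by rw [hgetB j1 (by omega)]; exact hB1)
      (by rw [hgetB j4 (by omega)]; exact hB4)
      (p.length + j2) (p.length + j3) (Or.inl ⟨rfl, rfl⟩)
      (by rw [hgetp j0 hj0]; exact hj0e)
      (by rw [hgetB j2 (by omega)]; exact hB2)
      (by rw [hgetB j3 (by omega)]; exact hB3)
      (by rw [hgets j5 hj5]; exact hj5e)
      (fun k hk1 hk2 => hnlB k (by omega) (by omega))
      (p.getLast hpne) (s.head hsne)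
      (by rw [hu_eq]; simp [List.getLast_mem hpne])
      (by rw [hu_eq]; simp [List.head_mem hsne])
      hl12 hl1lin hl2lin
  · intro hzp
    intro hys
    have hpne : p ≠ [] := List.ne_nil_of_mem hzp
    have hsne : s ≠ [] := List.ne_nil_of_mem hys
    obtain ⟨j0, hj0, hj0e⟩ := Stmt9.mem_index hzp
    obtain ⟨j5, hj5, hj5e⟩ := Stmt9.mem_index hys
    have hl1lin : u.count (p.getLast hpne) = 1 :=
      hplast _ (List.getLast?_eq_getLast hpne)
    have hl2lin : u.count (s.head hsne) = 1 :=
      hshead _ (List.head?_eq_head hsne)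
    have hl12 : p.getLast hpne ≠ s.head hsne := by
      intro h
      have := hcount3 (p.getLast hpne) (List.getLast_mem hpne) (h ▸ List.head_mem hsne)
      omega
    refine Stmt9.core hn xs hxs u Θ hΘne hcard hΘ' hT
      j0 (p.length + j1) (p.length + j2) (p.length + j3) (p.length + j4)
      (p.length + B.length + j5)
      (by omega) (by omega) (by omega) (by omega) (by omega) (by omega)
      x z y (fun h => hxz h.symm) hxy.symm
      (by rw [hgetB j1 (by omega)]; exact hB1)
      (by rw [hgetB j4 (by omega)]; exact hB4)
      (p.length + j3) (p.length + j2) (Or.inr ⟨rfl, rfl⟩)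
      (by rw [hgetp j0 hj0]; exact hj0e)
      (by rw [hgetB j3 (by omega)]; exact hB3)
      (by rw [hgetB j2 (by omega)]; exact hB2)
      (by rw [hgets j5 hj5]; exact hj5e)
      (fun k hk1 hk2 => hnlB k (by omega) (by omega))
      (p.getLast hpne) (s.head hsne)
      (by rw [hu_eq]; simp [List.getLast_mem hpne])
      (by rw [hu_eq]; simp [List.head_mem hsne])
      hl12 hl1lin hl2lin
end

section
/- Let u and v be two words of the same type such that lin(u) = lin(v), con₂(u) = con₂(v) and con₍>2₎(u) = con₍>2₎(v). Let Θ: 𝔄 → 𝔄⁺ be a substitution with the property that whenever Θ(x) contains more than one distinct variable, x ∈ lin(u) ∪ con₂(u). Then Θ(u) and Θ(v) are of the same type. -/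
/-!
Write `u = c₁^{p₁} ⋯ c_r^{p_r}` and `v = c₁^{q₁} ⋯ c_r^{q_r}` in run-length form. Collapsing runs
commutes with concatenation, so the type of `Θ(u)` is the collapsed concatenation of the types of
the blocks `Θ(cᵢ)^{pᵢ}`. When `Θ(cᵢ)` is a power of one variable, the type of its block does not
depend on `pᵢ`. Otherwise `cᵢ` occurs equally often, and at most twice, in `u` and `v`, and in the
same number of runs; its runs are then one run of length 1 or 2 or two runs of length 1 in both
words, so `pᵢ = qᵢ`.
-/

namespace List

variable {α : Type*}

theorem exists_destutter'_eq_cons (R : α → α → Prop) [DecidableRel R] (a : α) (l : List α) :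
    ∃ w, l.destutter' R a = a :: w := by
  induction l generalizing a with
  | nil => exact ⟨[], rfl⟩
  | cons b t ih =>
    rw [destutter'_cons]
    split_ifs
    · exact ⟨_, rfl⟩
    · exact ih a

theorem destutter'_append (R : α → α → Prop) [DecidableRel R] (a : α) (l₁ l₂ : List α) :
    (l₁ ++ l₂).destutter' R a = (l₁.destutter' R a ++ l₂).destutter R := by
  induction l₁ generalizing a with
  | nil => rfl
  | cons b t ih =>
    rw [cons_append, destutter'_cons, destutter'_cons]
    split_ifs with hab
    · obtain ⟨w, hw⟩ := exists_destutter'_eq_cons R b t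
      rw [ih, hw, cons_append, cons_append, destutter_cons', destutter_cons', cons_append,
        destutter'_cons_pos _ hab]
    · exact ih a

theorem destutter_destutter_append (R : α → α → Prop) [DecidableRel R] (l₁ l₂ : List α) :
    (l₁.destutter R ++ l₂).destutter R = (l₁ ++ l₂).destutter R := by
  cases l₁ with
  | nil => rfl
  | cons a t => exact (destutter'_append R a t l₂).symm

variable [DecidableEq α]

theorem destutter'_append_destutter (a : α) (l₁ l₂ : List α) :
    (l₁ ++ l₂.destutter (· ≠ ·)).destutter' (· ≠ ·) a = (l₁ ++ l₂).destutter' (· ≠ ·) a := by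
  induction l₁ generalizing a with
  | cons b t ih => rw [cons_append, cons_append, destutter'_cons, destutter'_cons, ih, ih]
  | nil =>
    cases l₂ with
    | nil => rfl
    | cons b l =>
      obtain ⟨w, hw⟩ := exists_destutter'_eq_cons (· ≠ ·) b l
      have hw' : w.destutter' (· ≠ ·) b = l.destutter' (· ≠ ·) b := by
        rw [destutter'_of_isChain_cons _ _ (hw ▸ isChain_destutter' _ l b), hw]
      rw [nil_append, nil_append, destutter_cons', hw, destutter'_cons, destutter'_cons]
      split_ifs with hab
      · rw [hw']
      · rw [not_not.mp hab, hw']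

theorem destutter_append_destutter (l₁ l₂ : List α) :
    (l₁ ++ l₂.destutter (· ≠ ·)).destutter (· ≠ ·) = (l₁ ++ l₂).destutter (· ≠ ·) := by
  cases l₁ with
  | nil => exact destutter_idem _ _
  | cons a t => exact destutter'_append_destutter a t l₂

theorem destutter_flatMap_destutter {β : Type*} (f : β → List α) (l : List β) :
    (l.flatMap fun x => (f x).destutter (· ≠ ·)).destutter (· ≠ ·) =
      (l.flatMap f).destutter (· ≠ ·) := by
  induction l with
  | nil => rfl
  | cons x t ih =>
    rw [flatMap_cons, flatMap_cons, ← destutter_append_destutter, ih, destutter_append_destutter,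
      destutter_destutter_append]

theorem destutter_replicate {n : ℕ} (hn : 0 < n) (a : α) :
    (replicate n a).destutter (· ≠ ·) = [a] := by
  obtain ⟨n, rfl⟩ := Nat.exists_eq_add_one_of_ne_zero hn.ne'
  rw [replicate_succ, destutter_cons']
  clear hn
  induction n with
  | zero => rfl
  | succ n ih => rwa [replicate_succ, destutter'_cons_neg _ (not_not.mpr rfl)]

theorem exists_eq_replicate_of_card_toFinset_le_one [Inhabited α] {l : List α}
    (h : l.toFinset.card ≤ 1) : ∃ a, l = replicate l.length a := by
  cases l with
  | nil => exact ⟨default, rfl⟩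
  | cons a t =>
    refine ⟨a, eq_replicate_iff.mpr ⟨rfl, fun b hb => ?_⟩⟩
    exact Finset.card_le_one.mp h b (mem_toFinset.mpr hb) a (by simp)

end List

open List

/-- The word `c₁^{k₁} ⋯ c_r^{k_r}` encoded by `[(c₁, k₁), …, (c_r, k_r)]`. -/
def runDecode {α : Type*} (L : List (α × ℕ)) : List α := L.flatMap fun e => replicate e.2 e.1

theorem exists_runDecode_eq {α : Type*} (u : List α) :
    ∃ L : List (α × ℕ), (L.map Prod.fst).IsChain (· ≠ ·) ∧ (∀ e ∈ L, 0 < e.2) ∧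
      runDecode L = u := by
  induction u with
  | nil => exact ⟨[], by simp, by simp, rfl⟩
  | cons a t ih =>
    obtain ⟨L, hchain, hpos, rfl⟩ := ih
    by_cases hhead : ∃ k r, L = (a, k) :: r
    · obtain ⟨k, r, rfl⟩ := hhead
      refine ⟨(a, k + 1) :: r, by simpa using hchain, ?_, by simp [runDecode, replicate_succ]⟩
      simp only [mem_cons, forall_eq_or_imp] at hpos ⊢
      exact ⟨k.succ_pos, hpos.2⟩
    · refine ⟨(a, 1) :: L, isChain_cons.mpr ⟨?_, hchain⟩, ?_, by simp [runDecode]⟩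
      · rintro b hb rfl
        cases L with
        | nil => simp at hb
        | cons e r =>
          simp only [map_cons, head?_cons, Option.mem_def, Option.some.injEq] at hb
          exact hhead ⟨e.2, r, by rw [← hb]⟩
      · simpa using hpos

theorem mem_runDecode {α : Type*} {L : List (α × ℕ)} (hpos : ∀ e ∈ L, 0 < e.2) (c : α) :
    c ∈ runDecode L ↔ c ∈ L.map Prod.fst := by
  simp only [runDecode, mem_flatMap, mem_replicate, mem_map]
  exact ⟨fun ⟨e, he, _, hc⟩ => ⟨e, he, hc.symm⟩,
    fun ⟨e, he, hc⟩ => ⟨e, he, (hpos e he).ne', hc.symm⟩⟩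

section RunDecode

variable {α : Type*} [DecidableEq α]

theorem count_runDecode_cons (a : α) (k : ℕ) (L : List (α × ℕ)) (c : α) :
    (runDecode ((a, k) :: L)).count c = (if a = c then k else 0) + (runDecode L).count c := by
  simp [runDecode, count_replicate]

theorem destutter_runDecode {L : List (α × ℕ)} (hchain : (L.map Prod.fst).IsChain (· ≠ ·))
    (hpos : ∀ e ∈ L, 0 < e.2) : (runDecode L).destutter (· ≠ ·) = L.map Prod.fst := by
  rw [runDecode, ← destutter_flatMap_destutter,
    flatMap_congr fun e he => destutter_replicate (hpos e he) e.1,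
    show (fun e : α × ℕ => [e.1]) = pure ∘ Prod.fst from rfl, flatMap_pure_eq_map,
    destutter_of_isChain _ _ hchain]

theorem map_eq_map_of_runDecode {β : Type*} (f : α × ℕ → β) {L₁ L₂ : List (α × ℕ)}
    (hfst : L₁.map Prod.fst = L₂.map Prod.fst)
    (hpos₁ : ∀ e ∈ L₁, 0 < e.2) (hpos₂ : ∀ e ∈ L₂, 0 < e.2)
    (h : ∀ c, (∀ p q, 0 < p → 0 < q → f (c, p) = f (c, q)) ∨
      ((runDecode L₁).count c = (runDecode L₂).count c ∧ (runDecode L₁).count c ≤ 2)) :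
    L₁.map f = L₂.map f := by
  induction L₁ generalizing L₂ with
  | nil => cases L₂ <;> simp_all
  | cons e₁ T₁ ih =>
    obtain ⟨⟨c', q⟩, T₂, rfl⟩ : ∃ e₂ T₂, L₂ = e₂ :: T₂ := by cases L₂ <;> simp_all
    obtain ⟨c, p⟩ := e₁
    simp only [map_cons, cons.injEq] at hfst ⊢
    obtain ⟨rfl, hT⟩ := hfst
    simp only [mem_cons, forall_eq_or_imp] at hpos₁ hpos₂
    obtain ⟨hp, hpos₁⟩ := hpos₁
    obtain ⟨hq, hpos₂⟩ := hpos₂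
    have count_step : ∀ c₀, (runDecode ((c, p) :: T₁)).count c₀ =
        (runDecode ((c, q) :: T₂)).count c₀ → (runDecode ((c, p) :: T₁)).count c₀ ≤ 2 →
        (c = c₀ → p = q) ∧ (runDecode T₁).count c₀ = (runDecode T₂).count c₀ := by
      intro c₀ heq hle
      have hzero : (runDecode T₁).count c₀ = 0 ↔ (runDecode T₂).count c₀ = 0 := by
        rw [count_eq_zero, count_eq_zero, mem_runDecode hpos₁, mem_runDecode hpos₂, hT]
      rw [count_runDecode_cons, count_runDecode_cons] at heq
      rw [count_runDecode_cons] at hle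
      split_ifs at heq hle with hc
      · exact ⟨fun _ => by omega, by omega⟩
      · exact ⟨fun h => absurd h hc, by omega⟩
    refine ⟨?_, ih hT hpos₁ hpos₂ fun c₀ => (h c₀).imp_right fun ⟨heq, hle⟩ =>
      ⟨(count_step c₀ heq hle).2, ?_⟩⟩
    · rcases h c with hgood | ⟨heq, hle⟩
      · exact hgood p q hp hq
      · rw [(count_step c heq hle).1 rfl]
    · rw [count_runDecode_cons] at hle
      omega

end RunDecode

theorem destutter_subst_runDecode (Θ : Var → Word) (L : List (Var × ℕ)) :
    (subst Θ (runDecode L)).destutter (· ≠ ·) =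
      (L.flatMap fun e => (subst Θ (replicate e.2 e.1)).destutter (· ≠ ·)).destutter (· ≠ ·) := by
  rw [destutter_flatMap_destutter, subst, runDecode, flatMap_assoc]
  rfl

theorem destutter_subst_replicate_eq (Θ : Var → Word) {c : Var} (h : (Θ c).toFinset.card ≤ 1)
    {p q : ℕ} (hp : 0 < p) (hq : 0 < q) :
    (subst Θ (replicate p c)).destutter (· ≠ ·) = (subst Θ (replicate q c)).destutter (· ≠ ·) := by
  obtain ⟨a, ha⟩ := exists_eq_replicate_of_card_toFinset_le_one h
  rw [subst, subst, flatMap_replicate, flatMap_replicate, ha, flatten_replicate_replicate,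
    flatten_replicate_replicate]
  rcases Nat.eq_zero_or_pos (Θ c).length with hn | hn
  · simp [hn]
  · rw [destutter_replicate (Nat.mul_pos hp hn), destutter_replicate (Nat.mul_pos hq hn)]

theorem stmt10_general (u v : Word)
    (hst : sameType u v)
    (hlin : lin u = lin v) (h2 : con2 u = con2 v)
    (Θ : Var → Word)
    (hΘ : ∀ x : Var, 2 ≤ (Θ x).toFinset.card → x ∈ lin u ∪ con2 u) :
    sameType (subst Θ u) (subst Θ v) := by
  obtain ⟨L₁, hchain₁, hpos₁, rfl⟩ := exists_runDecode_eq u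
  obtain ⟨L₂, hchain₂, hpos₂, rfl⟩ := exists_runDecode_eq v
  have hfst : L₁.map Prod.fst = L₂.map Prod.fst := by
    rw [← destutter_runDecode hchain₁ hpos₁, ← destutter_runDecode hchain₂ hpos₂]
    exact hst
  unfold sameType
  rw [destutter_subst_runDecode, destutter_subst_runDecode, flatMap_def, flatMap_def,
    map_eq_map_of_runDecode _ hfst hpos₁ hpos₂]
  intro c
  by_cases hcard : 2 ≤ (Θ c).toFinset.card
  · right
    have hu := hΘ c hcard
    have hlin_c := Set.ext_iff.mp hlin c
    have h2_c := Set.ext_iff.mp h2 c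
    simp only [Set.mem_union, lin, con2, Set.mem_ofPred_eq] at hu hlin_c h2_c
    omega
  · exact Or.inl fun p q hp hq =>
      destutter_subst_replicate_eq Θ (Nat.le_of_lt_succ (not_le.mp hcard)) hp hq

/-- if `u` and `v` are of the same type with the same linear
variables, the same variables occurring twice and the same variables occurring
more than twice, and `Θ` maps every variable occurring at least three times
to a power of a single variable, then `Θ(u)` and `Θ(v)` are of the same
type. -/
theorem stmt10 (u v : Word) (hu : u ≠ []) (hv : v ≠ [])
    (hst : sameType u v)
    (hlin : lin u = lin v) (h2 : con2 u = con2 v) (h3 : conGt2 u = conGt2 v)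
    (Θ : Var → Word) (hΘne : ∀ c : Var, Θ c ≠ [])
    (hΘ : ∀ x : Var, 2 ≤ (Θ x).toFinset.card → x ∈ lin u ∪ con2 u) :
    sameType (subst Θ u) (subst Θ v) :=
  stmt10_general u v hst hlin h2 Θ hΘ
end

section
/- Let S be a semigroup that satisfies Property (C₃). If S satisfies an identity u ≈ v, then con(u) = con(v) and lin(u) = lin(v). -/
/-!
If `x` occurs at most once in `u`, substitute `x ↦ y x y` and every other variable by `y`. The
image of `u` is a power of `y` or has the type `y x y`, so it has height at most `3`, and by
Property (C₃) the image of `v` has the same type. In both images every occurrence of `x` is an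
island of its own, so the number of `x`-islands, which the type determines, is the number of
occurrences of `x`. Hence `x` occurs equally often in `u` and `v` whenever it is absent from or
linear in one of them.
-/

section Evaluation

variable {S : Type} [Semigroup S]

/- `WithOne S` is `Option S` with `none` as the adjoined identity, so `evalS` is the product of
the word in the monoid `WithOne S`. -/
lemma evalS_eq_prod (φ : Var → S) (w : Word) :
    (evalS φ w : WithOne S) = (w.map fun a => (φ a : WithOne S)).prod := by
  have foldl_eq (s : S) (t : Word) :
      (((t.map φ).foldl (· * ·) s : S) : WithOne S) =
        s * (t.map fun a => (φ a : WithOne S)).prod := by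
    induction t generalizing s with
    | nil => simp
    | cons b t ih => simp [ih, mul_assoc]
  cases w with
  | nil => rfl
  | cons a t => exact foldl_eq (φ a) t

lemma exists_evalS_eq_some (φ : Var → S) {w : Word} (hw : w ≠ []) :
    ∃ s, evalS φ w = some s := by
  cases w with
  | nil => exact absurd rfl hw
  | cons a t => exact ⟨_, rfl⟩

lemma evalS_subst (φ ψ : Var → S) (Θ : Var → Word) (hΘ : ∀ z, evalS φ (Θ z) = some (ψ z))
    (w : Word) : evalS φ (subst Θ w) = evalS ψ w := by
  rw [evalS_eq_prod, evalS_eq_prod]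
  induction w with
  | nil => rfl
  | cons c t ih =>
    rw [subst, List.flatMap_cons, List.map_append, List.prod_append, ← subst, ih,
      ← evalS_eq_prod, hΘ]
    rfl

lemma SSat.symm {u v : Word} (h : SSat S u v) : SSat S v u :=
  fun φ => (h φ).symm

lemma SSat.subst {u v : Word} (h : SSat S u v) (Θ : Var → Word) (hΘ : ∀ z, Θ z ≠ []) :
    SSat S (subst Θ u) (subst Θ v) := by
  intro φ
  choose ψ hψ using fun z => exists_evalS_eq_some φ (hΘ z)
  rw [evalS_subst φ ψ Θ hψ, evalS_subst φ ψ Θ hψ]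
  exact h ψ

end Evaluation

section Destutter

variable {α : Type*}

lemma mem_pair_of_ne {x y a b : α} (ha : a = x ∨ a = y) (hb : b = x ∨ b = y) (hab : a ≠ b) :
    x ∈ [a, b] := by
  rcases ha with rfl | rfl <;> rcases hb with rfl | rfl <;> simp_all

variable [DecidableEq α]

lemma List.count_destutter'_of_isChain (x : α) :
    ∀ (l : List α) (a : α), (a :: l).IsChain (fun p q => p = x → q ≠ x) →
      (l.destutter' (· ≠ ·) a).count x = (a :: l).count x
  | [], _, _ => by simp
  | b :: l, a, hchain => by
    obtain ⟨hab, hchain⟩ := List.isChain_cons_cons.mp hchain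
    rw [List.destutter'_cons]
    by_cases hne : a ≠ b
    · rw [if_pos hne, List.count_cons, count_destutter'_of_isChain x l b hchain,
        ← List.count_cons]
    · obtain rfl : a = b := not_not.mp hne
      have hax : a ≠ x := fun hx => hab hx hx
      rw [if_neg hne, count_destutter'_of_isChain x l a hchain]
      simp [hax]

lemma List.count_destutter_of_isChain {x : α} {l : List α}
    (hl : l.IsChain (fun p q => p = x → q ≠ x)) : (l.destutter (· ≠ ·)).count x = l.count x := by
  cases l with
  | nil => rfl
  | cons a l => exact List.count_destutter'_of_isChain x l a hl

lemma length_le_three_of_isChain_ne {x y : α} :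
    ∀ {l : List α}, l.IsChain (· ≠ ·) → (∀ c ∈ l, c = x ∨ c = y) → l.count x ≤ 1 →
      l.length ≤ 3
  | [], _, _, _ | [_], _, _, _ | [_, _], _, _, _ | [_, _, _], _, _, _ => by simp
  | a :: b :: c :: d :: t, hchain, hmem, hcount => by
    simp only [List.isChain_cons_cons] at hchain
    have hab := mem_pair_of_ne (hmem a (by simp)) (hmem b (by simp)) hchain.1
    have hcd := mem_pair_of_ne (hmem c (by simp)) (hmem d (by simp)) hchain.2.2.1
    have : 2 ≤ (a :: b :: c :: d :: t).count x := by
      change 2 ≤ ([a, b] ++ [c, d] ++ t).count x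
      have := List.count_pos_iff.mpr hab
      have := List.count_pos_iff.mpr hcd
      rw [List.count_append, List.count_append]
      omega
    omega

end Destutter

section Isolation

def isolateSubst (x y : Var) (z : Var) : Word :=
  if z = x then [y, x, y] else [y]

variable {x y : Var}

lemma isolateSubst_ne_nil (z : Var) : isolateSubst x y z ≠ [] := by
  unfold isolateSubst; split_ifs <;> simp

lemma subst_isolateSubst_ne_nil {w : Word} (hw : w ≠ []) : subst (isolateSubst x y) w ≠ [] := by
  obtain ⟨a, t, rfl⟩ := List.exists_cons_of_ne_nil hw
  simp [subst, isolateSubst_ne_nil]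

lemma mem_subst_isolateSubst {w : Word} {c : Var} (hc : c ∈ subst (isolateSubst x y) w) :
    c = x ∨ c = y := by
  obtain ⟨z, -, hc⟩ := List.mem_flatMap.mp hc
  unfold isolateSubst at hc
  split_ifs at hc <;> simp only [List.mem_cons, List.not_mem_nil, or_false] at hc <;> tauto

lemma count_subst_isolateSubst (hyx : y ≠ x) (w : Word) :
    (subst (isolateSubst x y) w).count x = w.count x := by
  induction w with
  | nil => rfl
  | cons c t ih =>
    rw [subst, List.flatMap_cons, List.count_append, ← subst, ih]
    unfold isolateSubst
    by_cases hc : c = x <;> simp [hc, hyx, add_comm]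

lemma isChain_subst_isolateSubst (hyx : y ≠ x) (w : Word) :
    (subst (isolateSubst x y) w).IsChain (fun p q => p = x → q ≠ x) := by
  induction w with
  | nil => simp [subst]
  | cons c t ih =>
    rw [subst, List.flatMap_cons, ← subst]
    refine List.isChain_append.mpr ⟨?_, ih, fun p hp _ _ hpx => ?_⟩
    · unfold isolateSubst
      split_ifs <;> simp [List.isChain_cons_cons, hyx]
    · unfold isolateSubst at hp
      split_ifs at hp <;>
        simp only [List.getLast?_cons_cons, List.getLast?_singleton, Option.mem_def,
          Option.some.injEq] at hp <;> exact absurd (hp ▸ hpx) hyx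

end Isolation

lemma count_eq_of_count_le_one {S : Type} [Semigroup S] (hC3 : SPropC S 3) {u v : Word}
    (hu : u ≠ []) (h : SSat S u v) {x : Var} (hx : u.count x ≤ 1) : u.count x = v.count x := by
  set y := x + 1
  have hyx : y ≠ x := Nat.succ_ne_self x
  have islands_eq (w : Word) :
      ((subst (isolateSubst x y) w).destutter (· ≠ ·)).count x = w.count x := by
    rw [List.count_destutter_of_isChain (isChain_subst_isolateSubst hyx w),
      count_subst_isolateSubst hyx]
  have hheight : height (subst (isolateSubst x y) u) ≤ 3 :=
    length_le_three_of_isChain_ne (List.isChain_destutter _ _)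
      (fun c hc => mem_subst_isolateSubst ((List.destutter_sublist _ _).subset hc))
      (by rwa [islands_eq])
  have htype : sameType (subst (isolateSubst x y) u) (subst (isolateSubst x y) v) :=
    hC3 x y hyx.symm _ (subst_isolateSubst_ne_nil hu) (fun _ => mem_subst_isolateSubst) hheight _
      (h.subst _ isolateSubst_ne_nil)
  rw [← islands_eq u, ← islands_eq v]
  exact congrArg (List.count x) htype

/-- identities of a semigroup with Property (C₃) preserve
content and linear variables. -/
theorem stmt11 (S : Type) [Semigroup S] (hC3 : SPropC S 3)
    (u v : Word) (hu : u ≠ []) (hv : v ≠ []) (h : SSat S u v) :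
    con u = con v ∧ lin u = lin v := by
  have hcount (x : Var) (hx : u.count x ≤ 1 ∨ v.count x ≤ 1) : u.count x = v.count x :=
    hx.elim (count_eq_of_count_le_one hC3 hu h)
      fun hx => (count_eq_of_count_le_one hC3 hv h.symm hx).symm
  constructor
  · ext x
    simp only [con, Set.mem_ofPred_eq, ← List.count_pos_iff]
    have := hcount x
    omega
  · ext x
    simp only [lin, Set.mem_ofPred_eq]
    have := hcount x
    omega
end
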